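/- arXiv:1408.4047 — 5 statements merged into one kernel-verified Lean document; each statement's English description precedes it below -/
import Mathlib

section
/- Let f : (0, R) → ℝ be a monotone increasing function and suppose that for almost every r ∈ (0, R) the pointwise derivative f'(r) exists and satisfies f(r)^{(n-1)/n} ≤ C · f'(r) for a constant C > 0, with f(r) > 0 for all r ∈ (0,R). Then f(r) ≥ (r/(nC))^n for every r ∈ (0, R). -/
open Set MeasureTheory Filter

/-- Auxiliary: the key Gronwall step, giving a lower bound on `g r = f r ^ (1/n)`
on compact subintervals. -/
theorem stmt_0_aux (n : ℕ) (hn : 1 ≤ n) (C R : ℝ) (hC : 0 < C) (hR : 0 < R)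
    (f f' : ℝ → ℝ)
    (hmono : MonotoneOn f (Set.Ioo 0 R))
    (hpos : ∀ r ∈ Set.Ioo 0 R, 0 < f r)
    (hae : ∀ᵐ r ∂(volume.restrict (Set.Ioo 0 R)),
      HasDerivAt f (f' r) r ∧ f r ^ (((n : ℝ) - 1) / n) ≤ C * f' r)
    (s r' r : ℝ) (hs : 0 < s) (hsr' : s < r') (hr'r : r' < r) (hrR : r < R) :
    (r' - s) / (n * C) ≤ f r ^ ((n : ℝ)⁻¹) := by
  have hn0 : (0 : ℝ) < n := by exact_mod_cast hn
  have hnC : (0 : ℝ) < n * C := by positivity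
  set g : ℝ → ℝ := fun y => f y ^ ((n : ℝ)⁻¹) with hg
  have hgmono : MonotoneOn g (Set.Ioo 0 R) := fun a ha b hb hab =>
    Real.rpow_le_rpow (hpos a ha).le (hmono ha hb hab) (by positivity)
  -- the truncation
  set φ : ℝ → ℝ := fun y => min (max y s) r' with hφ
  have hφmem : ∀ y, φ y ∈ Set.Ioo 0 R := by
    intro y
    constructor
    · exact lt_min (lt_of_lt_of_le hs (le_max_right _ _)) (by linarith)
    · exact lt_of_le_of_lt (min_le_right _ _) (by linarith)
  set G : ℝ → ℝ := fun y => g (φ y) with hG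
  have hGmono : Monotone G := by
    intro a b hab
    exact hgmono (hφmem a) (hφmem b)
      (min_le_min (max_le_max hab le_rfl) le_rfl)
  set μ := hGmono.stieltjesFunction.measure with hμ
  -- a.e. on (s, r'), the Radon–Nikodym derivative of μ is at least 1/(nC)
  have hsub : Set.Ioo s r' ⊆ Set.Ioo 0 R := fun x hx => ⟨hs.trans hx.1, by
    have := hx.2; linarith⟩
  have hae' : ∀ᵐ x ∂volume, x ∈ Set.Ioo 0 R →
      (HasDerivAt f (f' x) x ∧ f x ^ (((n : ℝ) - 1) / n) ≤ C * f' x) :=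
    (ae_restrict_iff' measurableSet_Ioo).mp hae
  have key : ∀ᵐ x ∂(volume.restrict (Set.Ioo s r')),
      ENNReal.ofReal (1 / (n * C)) ≤ Measure.rnDeriv μ volume x := by
    rw [ae_restrict_iff' measurableSet_Ioo]
    filter_upwards [hGmono.ae_hasDerivAt, hae'] with x hx1 hx2 hxm
    have hxIoo : x ∈ Set.Ioo 0 R := hsub hxm
    obtain ⟨hfd, hineq⟩ := hx2 hxIoo
    have hfx : 0 < f x := hpos x hxIoo
    -- G = g near x
    have hGg : G =ᶠ[nhds x] g := by
      filter_upwards [Ioo_mem_nhds hxm.1 hxm.2] with y hy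
      have : φ y = y := by
        simp only [hφ]
        rw [max_eq_left hy.1.le, min_eq_left hy.2.le]
      simp only [hG, this]
    -- g has derivative (1/n) f x^(1/n - 1) f' x at x
    have hgd : HasDerivAt g (f' x * (n : ℝ)⁻¹ * f x ^ ((n : ℝ)⁻¹ - 1)) x :=
      hfd.rpow_const (Or.inl hfx.ne')
    have hGd : HasDerivAt G (f' x * (n : ℝ)⁻¹ * f x ^ ((n : ℝ)⁻¹ - 1)) x :=
      hgd.congr_of_eventuallyEq hGg
    have huniq : (Measure.rnDeriv μ volume x).toReal
        = f' x * (n : ℝ)⁻¹ * f x ^ ((n : ℝ)⁻¹ - 1) := hx1.unique hGd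
    -- the derivative bound
    have hf'pos : 0 < f' x := by
      have h1 : 0 < f x ^ (((n : ℝ) - 1) / n) := Real.rpow_pos_of_pos hfx _
      nlinarith [hineq]
    have hbound : 1 / (n * C) ≤ f' x * (n : ℝ)⁻¹ * f x ^ ((n : ℝ)⁻¹ - 1) := by
      have h2 : f x ^ (((n : ℝ) - 1) / n) / C ≤ f' x := by
        rw [div_le_iff₀ hC] at *
        linarith [hineq]
      have h3 : (f x ^ (((n : ℝ) - 1) / n) / C) * (n : ℝ)⁻¹ * f x ^ ((n : ℝ)⁻¹ - 1)
          ≤ f' x * (n : ℝ)⁻¹ * f x ^ ((n : ℝ)⁻¹ - 1) := by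
        have hp : (0 : ℝ) ≤ f x ^ ((n : ℝ)⁻¹ - 1) := (Real.rpow_pos_of_pos hfx _).le
        have hni : (0 : ℝ) ≤ (n : ℝ)⁻¹ := by positivity
        exact mul_le_mul_of_nonneg_right (mul_le_mul_of_nonneg_right h2 hni) hp
      refine le_trans (le_of_eq ?_) h3
      have hexp : ((n : ℝ) - 1) / n + ((n : ℝ)⁻¹ - 1) = 0 := by
        field_simp
        ring
      have hmul : f x ^ (((n : ℝ) - 1) / n) * f x ^ ((n : ℝ)⁻¹ - 1) = 1 := by
        rw [← Real.rpow_add hfx, hexp, Real.rpow_zero]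
      have hre : f x ^ (((n : ℝ) - 1) / n) / C * (n : ℝ)⁻¹ * f x ^ ((n : ℝ)⁻¹ - 1)
          = (f x ^ (((n : ℝ) - 1) / n) * f x ^ ((n : ℝ)⁻¹ - 1)) * ((n : ℝ)⁻¹ / C) := by
        ring
      rw [hre, hmul, one_mul]
      field_simp
    calc ENNReal.ofReal (1 / (n * C))
        ≤ ENNReal.ofReal ((Measure.rnDeriv μ volume x).toReal) := by
          apply ENNReal.ofReal_le_ofReal; rw [huniq]; exact hbound
      _ ≤ Measure.rnDeriv μ volume x := ENNReal.ofReal_toReal_le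
  -- integrate the bound
  have hIoo : μ (Set.Ioo s r') ≤ ENNReal.ofReal (g r - g s) := by
    rw [hμ, StieltjesFunction.measure_Ioo]
    apply ENNReal.ofReal_le_ofReal
    have h1 : Function.leftLim (hGmono.stieltjesFunction) r' ≤ g r := by
      refine le_trans (hGmono.stieltjesFunction.mono.leftLim_le le_rfl) ?_
      rw [hGmono.stieltjesFunction_eq]
      refine le_trans (hGmono.rightLim_le (lt_add_one r')) ?_
      have hφr : φ (r' + 1) = r' := by
        simp only [hφ]
        rw [max_eq_left (by linarith), min_eq_right (by linarith)]
      show g (φ (r' + 1)) ≤ g r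
      rw [hφr]
      exact hgmono ⟨by linarith, by linarith⟩ ⟨by linarith, hrR⟩ hr'r.le
    have h2 : g s ≤ hGmono.stieltjesFunction s := by
      rw [hGmono.stieltjesFunction_eq]
      have hφs : φ s = s := by
        simp only [hφ]
        rw [max_self, min_eq_left hsr'.le]
      have : G s = g s := by rw [hG]; simp only []; rw [hφs]
      rw [← this]
      exact hGmono.le_rightLim le_rfl
    linarith
  have hlow : ENNReal.ofReal (1 / (n * C)) * ENNReal.ofReal (r' - s)
      ≤ μ (Set.Ioo s r') := by
    calc ENNReal.ofReal (1 / (n * C)) * ENNReal.ofReal (r' - s)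
        = ∫⁻ _ in Set.Ioo s r', ENNReal.ofReal (1 / (n * C)) ∂volume := by
          rw [setLIntegral_const, Real.volume_Ioo]
      _ ≤ ∫⁻ x in Set.Ioo s r', Measure.rnDeriv μ volume x ∂volume :=
          lintegral_mono_ae key
      _ ≤ μ (Set.Ioo s r') := Measure.setLIntegral_rnDeriv_le _
  have hfin : ENNReal.ofReal (1 / (n * C) * (r' - s)) ≤ ENNReal.ofReal (g r - g s) := by
    rw [ENNReal.ofReal_mul (by positivity)]
    exact hlow.trans hIoo
  have hgs : 0 ≤ g s := (Real.rpow_pos_of_pos (hpos s ⟨hs, by linarith⟩) _).le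
  have := (ENNReal.ofReal_le_ofReal_iff (by
    have : g s ≤ g r := hgmono ⟨hs, by linarith⟩ ⟨by linarith, hrR⟩ (by linarith)
    linarith)).mp hfin
  have : (r' - s) / (n * C) ≤ g r - g s := by
    rw [div_eq_inv_mul, ← one_div]
    linarith [this]
  simp only [hg] at this ⊢
  linarith

/-- Gronwall-type argument (Step one of the proof of Theorem 1): an increasing
positive function on `(0,R)` whose a.e. derivative satisfies
`f(r)^((n-1)/n) ≤ C f'(r)` grows at least like `(r/(nC))^n`. -/
theorem stmt_0 (n : ℕ) (hn : 1 ≤ n) (C R : ℝ) (hC : 0 < C) (hR : 0 < R)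
    (f f' : ℝ → ℝ)
    (hmono : MonotoneOn f (Set.Ioo 0 R))
    (hpos : ∀ r ∈ Set.Ioo 0 R, 0 < f r)
    (hae : ∀ᵐ r ∂(volume.restrict (Set.Ioo 0 R)),
      HasDerivAt f (f' r) r ∧ f r ^ (((n : ℝ) - 1) / n) ≤ C * f' r) :
    ∀ r ∈ Set.Ioo 0 R, (r / (n * C)) ^ n ≤ f r := by
  intro r hr
  have hn0 : (0 : ℝ) < n := by exact_mod_cast hn
  have hnC : (0 : ℝ) < n * C := by positivity
  -- first show r / (nC) ≤ f r ^ (1/n)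
  have hkey : r / (n * C) ≤ f r ^ ((n : ℝ)⁻¹) := by
    have hlim : Filter.Tendsto (fun δ : ℝ => (r - 2 * δ) / (n * C)) (nhdsWithin 0 (Set.Ioi 0))
        (nhds (r / (n * C))) := by
      have : Filter.Tendsto (fun δ : ℝ => (r - 2 * δ) / (n * C)) (nhds 0)
          (nhds ((r - 2 * 0) / (n * C))) := by
        apply Filter.Tendsto.div_const
        exact (tendsto_const_nhds.sub ((continuous_const.mul continuous_id).tendsto 0))
      simpa using this.mono_left nhdsWithin_le_nhds
    refine le_of_tendsto hlim ?_
    filter_upwards [Ioo_mem_nhdsGT_of_mem (Set.left_mem_Ico.mpr (by have := hr.1; linarith : (0:ℝ) < r/3))]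
      with δ hδ
    have hδ0 : 0 < δ := hδ.1
    have hδr : δ < r / 3 := hδ.2
    have := stmt_0_aux n hn C R hC hR f f' hmono hpos hae δ (r - δ) r hδ0
      (by linarith) (by linarith) hr.2
    calc (r - 2 * δ) / (n * C) = ((r - δ) - δ) / (n * C) := by ring_nf
      _ ≤ f r ^ ((n : ℝ)⁻¹) := this
  -- now raise to the n-th power
  have hfr : 0 < f r := hpos r hr
  have h0 : (0 : ℝ) ≤ r / (n * C) := by exact div_nonneg hr.1.le hnC.le
  have h1 : (r / (n * C)) ^ n ≤ (f r ^ ((n : ℝ)⁻¹)) ^ n :=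
    pow_le_pow_left₀ h0 hkey n
  have h2 : (f r ^ ((n : ℝ)⁻¹)) ^ n = f r := by
    rw [← Real.rpow_natCast (f r ^ ((n : ℝ)⁻¹)), ← Real.rpow_mul hfr.le,
      inv_mul_cancel₀ hn0.ne', Real.rpow_one]
  linarith
end

section
/- Let f : (0, R) → ℝ be a positive monotone increasing function such that for almost every r ∈ (0, R) the pointwise derivative f'(r) exists and satisfies n·f(r) ≤ r·f'(r). Then the function r ↦ f(r)/r^n is monotone increasing on (0, R). -/
open Set MeasureTheory Filter

/-- Monotonicity argument (Step two of the proof of Theorem 1): if a positive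
increasing function satisfies `n f(r) ≤ r f'(r)` a.e., then `f(r)/r^n` is
monotone increasing on `(0,R)`. -/
theorem stmt_1 (n : ℕ) (hn : 1 ≤ n) (R : ℝ) (hR : 0 < R) (f f' : ℝ → ℝ)
    (hmono : MonotoneOn f (Set.Ioo 0 R))
    (hpos : ∀ r ∈ Set.Ioo 0 R, 0 < f r)
    (hae : ∀ᵐ r ∂(volume.restrict (Set.Ioo 0 R)),
      HasDerivAt f (f' r) r ∧ (n : ℝ) * f r ≤ r * f' r) :
    MonotoneOn (fun r => f r / r ^ n) (Set.Ioo 0 R) := by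
  intro r hr s hs hrs
  rcases eq_or_lt_of_le hrs with rfl | hlt
  · exact le_rfl
  -- clamp of the interval [r, s]
  set c : ℝ → ℝ := fun x => max r (min x s) with hc
  have hcmem : ∀ x, c x ∈ Icc r s := by
    intro x
    constructor
    · exact le_max_left _ _
    · exact max_le hrs (min_le_right _ _)
  have hIcc : Icc r s ⊆ Ioo 0 R := fun x hx =>
    ⟨lt_of_lt_of_le hr.1 hx.1, lt_of_le_of_lt hx.2 hs.2⟩
  have hcmono : Monotone c := fun a b hab =>
    max_le_max le_rfl (min_le_min hab le_rfl)
  have hcr : c r = r := by simp [hc, min_eq_left hrs, max_eq_right (le_refl r)]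
  have hcs : c s = s := by simp [hc, min_eq_left (le_refl s), max_eq_right hrs]
  set F : ℝ → ℝ := fun x => Real.log (f (c x)) with hF
  have hFmono : Monotone F := by
    intro a b hab
    have ha := hIcc (hcmem a)
    have hb := hIcc (hcmem b)
    exact Real.log_le_log (hpos _ ha) (hmono ha hb (hcmono hab))
  set μ := hFmono.stieltjesFunction.measure with hμ
  set D : ℝ → ENNReal := fun x => μ.rnDeriv volume x with hD
  have hsub : Ioo r s ⊆ Ioo 0 R := fun x hx =>
    ⟨hr.1.trans hx.1, hx.2.trans hs.2⟩
  -- a.e. lower bound for the Radon-Nikodym derivative on (r, s)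
  have key : ∀ᵐ x ∂(volume.restrict (Ioo r s)),
      ENNReal.ofReal ((n : ℝ) / x) ≤ D x := by
    have h1 : ∀ᵐ x ∂(volume.restrict (Ioo r s)), HasDerivAt F (D x).toReal x :=
      ae_restrict_of_ae hFmono.ae_hasDerivAt
    have h2 : ∀ᵐ x ∂(volume.restrict (Ioo r s)),
        HasDerivAt f (f' x) x ∧ (n : ℝ) * f x ≤ x * f' x := by
      exact ae_restrict_of_ae_restrict_of_subset hsub hae
    have h3 : ∀ᵐ x ∂(volume.restrict (Ioo r s)), x ∈ Ioo r s :=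
      ae_restrict_mem measurableSet_Ioo
    filter_upwards [h1, h2, h3] with x hF' hf' hx
    have hx0 : 0 < x := hr.1.trans hx.1
    have hfx : 0 < f x := hpos x (hsub hx)
    have hlog : HasDerivAt (fun y => Real.log (f y)) ((f x)⁻¹ * f' x) x :=
      (Real.hasDerivAt_log hfx.ne').comp x hf'.1
    have hFx : HasDerivAt F ((f x)⁻¹ * f' x) x := by
      apply hlog.congr_of_eventuallyEq
      filter_upwards [Ioo_mem_nhds hx.1 hx.2] with y hy
      have : c y = y := by simp [hc, min_eq_left hy.2.le, max_eq_right hy.1.le]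
      simp [hF, this]
    have hDx : (D x).toReal = (f x)⁻¹ * f' x := hF'.unique hFx
    have hle : (n : ℝ) / x ≤ (D x).toReal := by
      have h4 := mul_le_mul_of_nonneg_left hf'.2 (inv_nonneg.2 hfx.le)
      have h5 : (f x)⁻¹ * f x = 1 := inv_mul_cancel₀ hfx.ne'
      rw [hDx, div_le_iff₀ hx0]
      nlinarith [h4, h5]
    calc ENNReal.ofReal ((n : ℝ) / x)
        ≤ ENNReal.ofReal (D x).toReal := ENNReal.ofReal_le_ofReal hle
      _ ≤ D x := ENNReal.ofReal_toReal_le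
  -- the integral bound
  have hGs : hFmono.stieltjesFunction s ≤ F s := by
    have h1 : hFmono.stieltjesFunction s = Function.rightLim F s :=
      hFmono.stieltjesFunction_eq s
    have h2 : Function.rightLim F s ≤ F (s + 1) :=
      hFmono.rightLim_le (lt_add_one s)
    have h3 : F (s + 1) = F s := by
      have : c (s + 1) = c s := by
        simp [hc, min_eq_right (le_of_lt (lt_add_one s)), min_eq_left (le_refl s)]
      simp [hF, this]
    rw [h1, ← h3]; exact h2
  have hGr : F r ≤ hFmono.stieltjesFunction r := by
    rw [hFmono.stieltjesFunction_eq r]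
    exact hFmono.le_rightLim le_rfl
  have hBound : ∫⁻ x in Ioo r s, ENNReal.ofReal ((n : ℝ) / x)
      ≤ ENNReal.ofReal (F s - F r) := by
    calc ∫⁻ x in Ioo r s, ENNReal.ofReal ((n : ℝ) / x)
        ≤ ∫⁻ x in Ioo r s, D x := lintegral_mono_ae key
      _ = (volume.withDensity D) (Ioo r s) :=
          (withDensity_apply _ measurableSet_Ioo).symm
      _ ≤ μ (Ioo r s) :=
          Measure.le_iff'.1 (Measure.withDensity_rnDeriv_le μ volume) _
      _ ≤ μ (Ioc r s) := measure_mono Ioo_subset_Ioc_self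
      _ = ENNReal.ofReal (hFmono.stieltjesFunction s - hFmono.stieltjesFunction r) :=
          hFmono.stieltjesFunction.measure_Ioc r s
      _ ≤ ENNReal.ofReal (F s - F r) :=
          ENNReal.ofReal_le_ofReal (by linarith)
  -- compute the left-hand integral
  have hInt : IntegrableOn (fun x => (n : ℝ) / x) (Ioo r s) := by
    apply (ContinuousOn.integrableOn_Icc ?_).mono_set Ioo_subset_Icc_self
    exact continuousOn_const.div continuousOn_id
      (fun x hx => ne_of_gt (lt_of_lt_of_le hr.1 hx.1))
  have hnn : 0 ≤ᵐ[volume.restrict (Ioo r s)] fun x => (n : ℝ) / x := by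
    filter_upwards [ae_restrict_mem measurableSet_Ioo] with x hx
    exact div_nonneg (Nat.cast_nonneg n) (le_of_lt (hr.1.trans hx.1))
  have hEq : ∫⁻ x in Ioo r s, ENNReal.ofReal ((n : ℝ) / x)
      = ENNReal.ofReal (∫ x in Ioo r s, (n : ℝ) / x) :=
    (MeasureTheory.ofReal_integral_eq_lintegral_ofReal hInt hnn).symm
  have hval : ∫ x in Ioo r s, (n : ℝ) / x
      = (n : ℝ) * (Real.log s - Real.log r) := by
    rw [← integral_Ioc_eq_integral_Ioo, ← intervalIntegral.integral_of_le hrs]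
    have : ∀ x : ℝ, (n : ℝ) / x = (n : ℝ) * (1 / x) := by intro x; ring
    simp_rw [this]
    rw [intervalIntegral.integral_const_mul, integral_one_div, Real.log_div hs.1.ne' hr.1.ne']
    intro h
    rw [Set.uIcc_of_le hrs] at h
    exact absurd h.1 (not_le.2 hr.1)
  -- conclude
  have hmain : (n : ℝ) * (Real.log s - Real.log r) ≤ F s - F r := by
    have := hBound
    rw [hEq, hval] at this
    exact (ENNReal.ofReal_le_ofReal_iff (sub_nonneg.2 (hFmono hrs))).1 this
  have hFr : F r = Real.log (f r) := by rw [hF]; simp [hcr]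
  have hFs : F s = Real.log (f s) := by rw [hF]; simp [hcs]
  have hfr : 0 < f r := hpos r hr
  have hfs : 0 < f s := hpos s hs
  have hrpow : (0 : ℝ) < r ^ n := pow_pos hr.1 n
  have hspow : (0 : ℝ) < s ^ n := pow_pos hs.1 n
  rw [← Real.log_le_log_iff (div_pos hfr hrpow) (div_pos hfs hspow),
    Real.log_div hfr.ne' hrpow.ne', Real.log_div hfs.ne' hspow.ne',
    Real.log_pow, Real.log_pow]
  rw [hFr, hFs] at hmain
  linarith
end

section
/- Let (μ_j) be a sequence of Radon measures on an open set U ⊆ ℝ^{n+1} converging weakly-* to a Radon measure μ, and for each j let f_j(r) = μ_j(B(x,r)) for a fixed x ∈ U. Suppose each f_j is differentiable a.e. with f_j'(r) ≥ g_j(r) for a.e. r, where g_j ≥ 0 are measurable. Set g(t) = liminf_j g_j(t). Then for all 0 < s < r with B(x,r) ⊆ U and μ(∂B(x,r)) = μ(∂B(x,s)) = 0, one has μ(B(x,r)) − μ(B(x,s)) ≥ ∫_s^r g(t) dt. -/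
open Set MeasureTheory Metric Filter

open scoped ENNReal NNReal

lemma ofReal_liminf_le (x : ℕ → ℝ) (hx : ∀ j, 0 ≤ x j) :
    ENNReal.ofReal (liminf x atTop) ≤ liminf (fun j => ENNReal.ofReal (x j)) atTop := by
  rw [liminf_eq]
  set S := {a : ℝ | ∀ᶠ j in atTop, a ≤ x j} with hS
  by_cases hbdd : BddAbove S
  · have hne : S.Nonempty := ⟨0, Filter.Eventually.of_forall hx⟩
    refine ENNReal.le_of_forall_pos_le_add fun ε hε _ => ?_
    set c := sSup S with hc
    have hc0 : (0:ℝ) ≤ c := le_csSup hbdd (Filter.Eventually.of_forall hx)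
    by_cases hce : c ≤ (ε : ℝ)
    · calc ENNReal.ofReal c ≤ ENNReal.ofReal (ε : ℝ) := ENNReal.ofReal_le_ofReal hce
        _ = (ε : ℝ≥0∞) := ENNReal.ofReal_coe_nnreal
        _ ≤ _ := le_add_self
    · push_neg at hce
      have hlt : c - (ε:ℝ) < c := by
        have : (0:ℝ) < ε := hε
        linarith
      obtain ⟨a, haS, hlta⟩ := exists_lt_of_lt_csSup hne hlt
      have h1 : ENNReal.ofReal (c - ε) ≤ liminf (fun j => ENNReal.ofReal (x j)) atTop := by
        refine le_liminf_of_le (by isBoundedDefault) ?_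
        filter_upwards [haS] with j hj
        exact ENNReal.ofReal_le_ofReal (le_trans (le_of_lt hlta) hj)
      calc ENNReal.ofReal c = ENNReal.ofReal ((c - (ε:ℝ)) + (ε:ℝ)) := by ring_nf
        _ ≤ ENNReal.ofReal (c - (ε:ℝ)) + ENNReal.ofReal (ε:ℝ) := ENNReal.ofReal_add_le
        _ ≤ liminf (fun j => ENNReal.ofReal (x j)) atTop + (ε : ℝ≥0∞) := by
            rw [ENNReal.ofReal_coe_nnreal]; exact add_le_add h1 le_rfl
  · rw [Real.sSup_of_not_bddAbove hbdd, ENNReal.ofReal_zero]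
    exact zero_le

lemma claimA (F f' g : ℝ → ℝ) (hF : Monotone F) (s r : ℝ) (hsr : s ≤ r)
    (hFr : ∀ t, r ≤ t → F t = F r)
    (hg0 : ∀ t, 0 ≤ g t) (hgm : Measurable g)
    (hd : ∀ᵐ ρ ∂(volume : Measure ℝ), ρ ∈ Ioo s r → HasDerivAt F (f' ρ) ρ ∧ g ρ ≤ f' ρ) :
    ∫⁻ t in Ioc s r, ENNReal.ofReal (g t) ≤ ENNReal.ofReal (F r - F s) := by
  set h : ℕ → ℝ := fun k => 1 / (k + 1) with hh
  have hhpos : ∀ k, 0 < h k := fun k => by positivity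
  have hh0 : Tendsto h atTop (nhds 0) := tendsto_one_div_add_atTop_nhds_zero_nat
  set q : ℕ → ℝ → ℝ := fun k t => (F (t + h k) - F t) / h k with hq
  have hFm : Measurable F := hF.measurable
  have hqm : ∀ k, Measurable (fun t => ENNReal.ofReal (q k t)) := by
    intro k
    apply Measurable.ennreal_ofReal
    exact ((hFm.comp (measurable_id.add_const _)).sub hFm).div_const _
  have hq0 : ∀ k t, 0 ≤ q k t := by
    intro k t
    apply div_nonneg _ (hhpos k).le
    simp only [sub_nonneg]
    exact hF (by linarith [(hhpos k).le])
  -- pointwise convergence of difference quotients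
  have key : ∀ᵐ t ∂(volume.restrict (Ioc s r)),
      ENNReal.ofReal (g t) ≤ liminf (fun k => ENNReal.ofReal (q k t)) atTop := by
    have h1 : ∀ᵐ t ∂(volume.restrict (Ioc s r)), t ∈ Ioo s r := by
      have hmem := ae_restrict_mem (μ := (volume : Measure ℝ)) measurableSet_Ioc (s := Ioc s r)
      have hner : ∀ᵐ t ∂(volume.restrict (Ioc s r)), t ≠ r := by
        refine (ae_iff.2 ?_)
        have : {t : ℝ | ¬ t ≠ r} = {r} := by ext t; simp
        rw [this]
        exact le_antisymm ((Measure.restrict_apply_le _ _).trans (by simp)) zero_le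
      filter_upwards [hmem, hner] with t ht hne
      exact ⟨ht.1, lt_of_le_of_ne ht.2 hne⟩
    have h2 : ∀ᵐ t ∂(volume.restrict (Ioc s r)),
        (t ∈ Ioo s r → HasDerivAt F (f' t) t ∧ g t ≤ f' t) := ae_restrict_of_ae hd
    filter_upwards [h1, h2] with t ht hder
    obtain ⟨hdF, hgf⟩ := hder ht
    have hslope : Tendsto (fun k => q k t) atTop (nhds (f' t)) := by
      have h₁ : Tendsto (fun k => t + h k) atTop (nhdsWithin t {t}ᶜ) := by
        apply tendsto_nhdsWithin_of_tendsto_nhds_of_eventually_within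
        · simpa using (tendsto_const_nhds.add hh0)
        · exact Eventually.of_forall fun k => by
            simp [ne_of_gt (by linarith [hhpos k] : t < t + h k)]
      have h₂ := (hasDerivAt_iff_tendsto_slope.1 hdF).comp h₁
      refine h₂.congr fun k => ?_
      simp [slope_def_field, hq]
    have : Tendsto (fun k => ENNReal.ofReal (q k t)) atTop (nhds (ENNReal.ofReal (f' t))) :=
      (ENNReal.continuous_ofReal.tendsto _).comp hslope
    rw [this.liminf_eq]
    exact ENNReal.ofReal_le_ofReal hgf
  calc ∫⁻ t in Ioc s r, ENNReal.ofReal (g t)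
      ≤ ∫⁻ t in Ioc s r, liminf (fun k => ENNReal.ofReal (q k t)) atTop := lintegral_mono_ae key
    _ ≤ liminf (fun k => ∫⁻ t in Ioc s r, ENNReal.ofReal (q k t)) atTop :=
        lintegral_liminf_le hqm
    _ ≤ ENNReal.ofReal (F r - F s) := by
        have hbound : ∀ k, ∫⁻ t in Ioc s r, ENNReal.ofReal (q k t)
            ≤ ENNReal.ofReal (F r - F s) := by
          intro k
          have hFh : Monotone (fun t => F (t + h k)) := fun a b hab => hF (by linarith)
          have hqI : IntervalIntegrable (q k) volume s r :=
            ((hFh.intervalIntegrable).sub hF.intervalIntegrable).div_const _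
          have hInt : IntegrableOn (q k) (Ioc s r) volume :=
            (intervalIntegrable_iff_integrableOn_Ioc_of_le hsr).1 hqI
          have heq : ∫⁻ t in Ioc s r, ENNReal.ofReal (q k t)
              = ENNReal.ofReal (∫ t in Ioc s r, q k t) :=
            (ofReal_integral_eq_lintegral_ofReal hInt
              (Eventually.of_forall fun t => hq0 k t)).symm
          rw [heq]
          apply ENNReal.ofReal_le_ofReal
          rw [← intervalIntegral.integral_of_le hsr]
          have hrr : r ≤ r + h k := by linarith [hhpos k]
          have hss : s ≤ s + h k := by linarith [hhpos k]
          have e1 : ∫ t in s..r, q k t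
              = ((∫ t in s..r, F (t + h k)) - ∫ t in s..r, F t) / h k := by
            rw [← intervalIntegral.integral_sub hFh.intervalIntegrable hF.intervalIntegrable,
              ← intervalIntegral.integral_div]
          have e2 : (∫ t in s..r, F (t + h k)) = ∫ t in (s + h k)..(r + h k), F t :=
            intervalIntegral.integral_comp_add_right F (h k)
          have c1 : (∫ t in s..(s + h k), F t) + (∫ t in (s + h k)..(r + h k), F t)
              = ∫ t in s..(r + h k), F t :=
            intervalIntegral.integral_add_adjacent_intervals
              hF.intervalIntegrable hF.intervalIntegrable
          have c2 : (∫ t in s..r, F t) + (∫ t in r..(r + h k), F t)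
              = ∫ t in s..(r + h k), F t :=
            intervalIntegral.integral_add_adjacent_intervals
              hF.intervalIntegrable hF.intervalIntegrable
          have e3 : (∫ t in r..(r + h k), F t) = h k * F r := by
            rw [intervalIntegral.integral_congr (g := fun _ => F r)
              (fun t ht => by
                rw [uIcc_of_le hrr] at ht
                exact hFr t ht.1),
              intervalIntegral.integral_const, smul_eq_mul]
            ring
          have e4 : h k * F s ≤ ∫ t in s..(s + h k), F t := by
            have := intervalIntegral.integral_mono_on hss
              (intervalIntegrable_const (μ := volume) (c := F s)) hF.intervalIntegrable
              (fun t ht => hF ht.1)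
            rw [intervalIntegral.integral_const, smul_eq_mul] at this
            calc h k * F s = (s + h k - s) * F s := by ring
              _ ≤ _ := this
          rw [e1, e2, div_le_iff₀ (hhpos k)]
          have : (∫ t in (s + h k)..(r + h k), F t) - ∫ t in s..r, F t
              = h k * F r - ∫ t in s..(s + h k), F t := by linarith
          rw [this]
          nlinarith [hhpos k]
        calc liminf (fun k => ∫⁻ t in Ioc s r, ENNReal.ofReal (q k t)) atTop
            ≤ liminf (fun _ : ℕ => ENNReal.ofReal (F r - F s)) atTop :=
              liminf_le_liminf (Eventually.of_forall hbound)
          _ = ENNReal.ofReal (F r - F s) := liminf_const _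

variable {E : Type*} [MetricSpace E] [ProperSpace E] [MeasurableSpace E] [BorelSpace E]

lemma testfun (x : E) (a b : ℝ) (ha : 0 < a) (hab : a < b) :
    ∃ φ : E → ℝ, Continuous φ ∧ HasCompactSupport φ ∧
      (∀ y, 0 ≤ φ y) ∧ (∀ y, φ y ≤ 1) ∧ (∀ y ∈ closedBall x a, φ y = 1) ∧
      (∀ y, y ∉ ball x b → φ y = 0) := by
  refine ⟨fun y => max 0 (min 1 ((b - dist y x) / (b - a))), ?_, ?_, ?_, ?_, ?_, ?_⟩
  · exact (continuous_const.max (continuous_const.min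
      (((continuous_const.sub (continuous_id.dist continuous_const)).div_const _))))
  · apply HasCompactSupport.intro (isCompact_closedBall x b)
    intro y hy
    simp only [mem_closedBall, not_le] at hy
    have : (b - dist y x) / (b - a) ≤ 0 :=
      div_nonpos_of_nonpos_of_nonneg (by linarith) (by linarith)
    simp only [max_eq_left_iff]
    exact min_le_of_right_le this
  · intro y; exact le_max_left _ _
  · intro y; exact max_le (by norm_num) (min_le_left _ _)
  · intro y hy
    simp only [mem_closedBall] at hy
    have h1 : (1:ℝ) ≤ (b - dist y x) / (b - a) := by
      rw [le_div_iff₀ (by linarith)]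
      linarith
    simp only []
    rw [min_eq_left h1, max_eq_right zero_le_one]
  · intro y hy
    simp only [mem_ball, not_lt] at hy
    have : (b - dist y x) / (b - a) ≤ 0 :=
      div_nonpos_of_nonpos_of_nonneg (by linarith) (by linarith)
    simp only [max_eq_left_iff]
    exact min_le_of_right_le this

lemma sandwich (ν : Measure E) [IsFiniteMeasureOnCompacts ν] (x : E) (a b : ℝ)
    (hab : a ≤ b) (φ : E → ℝ) (hc : Continuous φ) (hcs : HasCompactSupport φ)
    (h0 : ∀ y, 0 ≤ φ y) (h1 : ∀ y, φ y ≤ 1) (hone : ∀ y ∈ closedBall x a, φ y = 1)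
    (hzero : ∀ y, y ∉ ball x b → φ y = 0) :
    (ν (closedBall x a)).toReal ≤ ∫ y, φ y ∂ν ∧ ∫ y, φ y ∂ν ≤ (ν (ball x b)).toReal := by
  have hint : Integrable φ ν := hc.integrable_of_hasCompactSupport hcs
  constructor
  · calc (ν (closedBall x a)).toReal = ∫ y in closedBall x a, (1:ℝ) ∂ν := by
          rw [setIntegral_const]; simp [Measure.real]
      _ = ∫ y in closedBall x a, φ y ∂ν :=
          setIntegral_congr_fun (μ := ν) measurableSet_closedBall
            (fun y hy => (hone y hy).symm)
      _ ≤ ∫ y, φ y ∂ν := setIntegral_le_integral hint (Eventually.of_forall h0)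
  · have hfin : ν (ball x b) < ⊤ :=
      lt_of_le_of_lt (measure_mono ball_subset_closedBall) (isCompact_closedBall x b).measure_lt_top
    calc ∫ y, φ y ∂ν = ∫ y in ball x b, φ y ∂ν :=
          (setIntegral_eq_integral_of_forall_compl_eq_zero (fun y hy => hzero y hy)).symm
      _ ≤ ∫ y in ball x b, (1:ℝ) ∂ν := by
          apply setIntegral_mono_on hint.integrableOn
            (integrableOn_const hfin.ne) measurableSet_ball
          exact fun y _ => h1 y
      _ = (ν (ball x b)).toReal := by rw [setIntegral_const]; simp [Measure.real]

lemma ennreal_le_liminf_add (u v : ℕ → ℝ≥0∞) :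
    liminf u atTop + liminf v atTop ≤ liminf (fun j => u j + v j) atTop := by
  have h1 : Nonempty {a : ℝ≥0∞ | ∀ᶠ n in atTop, a ≤ u n} :=
    ⟨⟨0, Eventually.of_forall fun _ => zero_le⟩⟩
  have h2 : Nonempty {a : ℝ≥0∞ | ∀ᶠ n in atTop, a ≤ v n} :=
    ⟨⟨0, Eventually.of_forall fun _ => zero_le⟩⟩
  rw [liminf_eq, liminf_eq, sSup_eq_iSup', sSup_eq_iSup']
  refine ENNReal.iSup_add_iSup_le ?_
  rintro ⟨a, ha⟩ ⟨b, hb⟩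
  refine le_liminf_of_le (by isBoundedDefault) ?_
  filter_upwards [ha, hb] with j hj1 hj2
  exact add_le_add hj1 hj2


/-- Combination of weak-* convergence of Radon measures and Fatou's lemma
(Step one of the proof of Theorem 1): if `f_j(r) = μ_j(B(x,r))` has a.e.
derivative `f_j' ≥ g_j ≥ 0` and `g = liminf_j g_j`, then for `0 < s < r` with
`μ`-null boundary spheres, `μ(B(x,r)) − μ(B(x,s)) ≥ ∫_s^r g`. -/
theorem stmt_3 (n : ℕ) (U : Set (EuclideanSpace ℝ (Fin (n + 1)))) (hU : IsOpen U)
    (μ : Measure (EuclideanSpace ℝ (Fin (n + 1))))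
    (μs : ℕ → Measure (EuclideanSpace ℝ (Fin (n + 1))))
    (hμ : IsLocallyFiniteMeasure μ) (hμs : ∀ j, IsLocallyFiniteMeasure (μs j))
    (hconv : ∀ f : EuclideanSpace ℝ (Fin (n + 1)) → ℝ, Continuous f →
      HasCompactSupport f → tsupport f ⊆ U →
      Tendsto (fun j => ∫ x, f x ∂(μs j)) atTop (nhds (∫ x, f x ∂μ)))
    (x : EuclideanSpace ℝ (Fin (n + 1))) (hx : x ∈ U)
    (f' g : ℕ → ℝ → ℝ)
    (hg0 : ∀ j t, 0 ≤ g j t) (hgm : ∀ j, Measurable (g j))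
    (hderiv : ∀ j, ∀ᵐ ρ ∂(volume : Measure ℝ),
      HasDerivAt (fun t => ((μs j) (ball x t)).toReal) (f' j ρ) ρ ∧ g j ρ ≤ f' j ρ)
    (G : ℝ → ℝ) (hG : ∀ t, G t = liminf (fun j => g j t) atTop)
    (s r : ℝ) (hs : 0 < s) (hsr : s < r) (hball : closedBall x r ⊆ U)
    (hnulls : μ (sphere x s) = 0) (hnullr : μ (sphere x r) = 0) :
    ∫ t in s..r, G t ≤ (μ (ball x r)).toReal - (μ (ball x s)).toReal := by
  haveI := hμ
  have hr0 : 0 < r := hs.trans hsr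
  -- cushion above r
  obtain ⟨ε0, hε0, hthick⟩ :=
    (isCompact_closedBall x r).exists_cthickening_subset_open hU hball
  have hcb' : ∀ b, b ≤ r + ε0 → closedBall x b ⊆ U := by
    intro b hb
    have h2 : closedBall x (ε0 + r) ⊆ U := by
      rw [← cthickening_closedBall hε0.le hr0.le x]
      exact hthick
    exact (closedBall_subset_closedBall (by linarith)).trans h2
  -- notation
  set A : ℕ → ℝ≥0∞ := fun j => μs j (ball x r) with hA
  set B : ℕ → ℝ≥0∞ := fun j => μs j (ball x s) with hB
  have hAfin : ∀ j, A j ≠ ⊤ := by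
    intro j
    haveI := hμs j
    exact (lt_of_le_of_lt (measure_mono ball_subset_closedBall)
      (isCompact_closedBall x r).measure_lt_top).ne
  have hBfin : ∀ j, B j ≠ ⊤ := by
    intro j
    haveI := hμs j
    exact (lt_of_le_of_lt (measure_mono ((ball_subset_ball hsr.le).trans
      ball_subset_closedBall)) (isCompact_closedBall x r).measure_lt_top).ne
  have hBA : ∀ j, B j ≤ A j := fun j => measure_mono (ball_subset_ball hsr.le)
  -- Claim A for each j
  have hclaimA : ∀ j, ∫⁻ t in Ioc s r, ENNReal.ofReal (g j t) ≤ A j - B j := by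
    intro j
    haveI := hμs j
    set F : ℝ → ℝ := fun t => (μs j (ball x (min t r))).toReal with hF
    have hfin : ∀ t, μs j (ball x (min t r)) ≠ ⊤ := by
      intro t
      exact (lt_of_le_of_lt (measure_mono ((ball_subset_ball (min_le_right t r)).trans
        ball_subset_closedBall)) (isCompact_closedBall x r).measure_lt_top).ne
    have hFmono : Monotone F := by
      intro a b hab
      exact ENNReal.toReal_mono (hfin b)
        (measure_mono (ball_subset_ball (min_le_min_right r hab)))
    have hFr : ∀ t, r ≤ t → F t = F r := by
      intro t ht
      simp only [hF, min_eq_right ht, min_self]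
    have hd : ∀ᵐ ρ ∂(volume : Measure ℝ), ρ ∈ Ioo s r →
        HasDerivAt F (f' j ρ) ρ ∧ g j ρ ≤ f' j ρ := by
      filter_upwards [hderiv j] with ρ hρ hmem
      refine ⟨hρ.1.congr_of_eventuallyEq ?_, hρ.2⟩
      filter_upwards [isOpen_Iio.mem_nhds hmem.2] with t ht
      simp only [hF, min_eq_left (le_of_lt (mem_Iio.mp ht))]
    have := claimA F (f' j) (g j) hFmono s r hsr.le hFr (hg0 j) (hgm j) hd
    refine this.trans (le_of_eq ?_)
    have e1 : F r = (A j).toReal := by simp [hF, hA, min_self]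
    have e2 : F s = (B j).toReal := by simp [hF, hB, min_eq_left hsr.le]
    rw [e1, e2, ENNReal.ofReal_sub _ ENNReal.toReal_nonneg,
      ENNReal.ofReal_toReal (hAfin j), ENNReal.ofReal_toReal (hBfin j)]
  -- Claim B (i) : limsup A ≤ μ (ball x r)
  have hub : limsup A atTop ≤ μ (ball x r) := by
    have key : ∀ b, r < b → b ≤ r + ε0 → limsup A atTop ≤ μ (closedBall x b) := by
      intro b hrb hbε
      obtain ⟨φ, φc, φcs, φ0, φ1, φone, φzero⟩ := testfun x r b hr0 hrb
      have hts : tsupport φ ⊆ closedBall x b := by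
        refine (closure_minimal ?_ isClosed_closedBall)
        intro y hy
        by_contra hyb
        exact hy (φzero y (fun h => hyb (ball_subset_closedBall h)))
      have htend := hconv φ φc φcs (hts.trans (hcb' b hbε))
      have hj : ∀ j, A j ≤ ENNReal.ofReal (∫ y, φ y ∂(μs j)) := by
        intro j
        haveI := hμs j
        have hs1 := (sandwich (μs j) x r b hrb.le φ φc φcs φ0 φ1 φone φzero).1
        calc A j ≤ μs j (closedBall x r) := measure_mono ball_subset_closedBall
          _ = ENNReal.ofReal ((μs j (closedBall x r)).toReal) := by
              rw [ENNReal.ofReal_toReal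
                (isCompact_closedBall x r).measure_lt_top.ne]
          _ ≤ _ := ENNReal.ofReal_le_ofReal hs1
      have hlim : Tendsto (fun j => ENNReal.ofReal (∫ y, φ y ∂(μs j))) atTop
          (nhds (ENNReal.ofReal (∫ y, φ y ∂μ))) :=
        (ENNReal.continuous_ofReal.tendsto _).comp htend
      calc limsup A atTop
          ≤ limsup (fun j => ENNReal.ofReal (∫ y, φ y ∂(μs j))) atTop :=
            limsup_le_limsup (Eventually.of_forall hj)
        _ = ENNReal.ofReal (∫ y, φ y ∂μ) := hlim.limsup_eq
        _ ≤ μ (ball x b) := by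
            have := (sandwich μ x r b hrb.le φ φc φcs φ0 φ1 φone φzero).2
            calc ENNReal.ofReal (∫ y, φ y ∂μ)
                ≤ ENNReal.ofReal ((μ (ball x b)).toReal) := ENNReal.ofReal_le_ofReal this
              _ ≤ μ (ball x b) := ENNReal.ofReal_toReal_le
        _ ≤ μ (closedBall x b) := measure_mono ball_subset_closedBall
    -- shrink b to r
    set bk : ℕ → ℝ := fun k => r + ε0 / (k + 1) with hbk
    have hbk_anti : Antitone fun k => closedBall x (bk k) := by
      intro k m hkm
      apply closedBall_subset_closedBall
      have h1 : (k : ℝ) + 1 ≤ (m : ℝ) + 1 := by exact_mod_cast by omega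
      have h2 : ε0 / ((m:ℝ) + 1) ≤ ε0 / ((k:ℝ)+1) :=
        div_le_div_of_nonneg_left hε0.le (by positivity) h1
      simp only [hbk]
      linarith
    have hInter : ⋂ k, closedBall x (bk k) = closedBall x r := by
      apply Subset.antisymm
      · intro y hy
        simp only [mem_iInter, mem_closedBall] at hy ⊢
        have htend : Tendsto bk atTop (nhds r) := by
          have := tendsto_one_div_add_atTop_nhds_zero_nat (𝕜 := ℝ)
          have h2 : Tendsto (fun k : ℕ => ε0 * (1 / ((k:ℝ) + 1))) atTop (nhds (ε0 * 0)) :=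
            this.const_mul ε0
          simp only [mul_zero] at h2
          have : Tendsto (fun k : ℕ => r + ε0 * (1 / ((k:ℝ) + 1))) atTop (nhds (r + 0)) :=
            tendsto_const_nhds.add h2
          simpa [hbk, mul_one_div, div_eq_mul_inv] using this
        exact ge_of_tendsto htend (Eventually.of_forall hy)
      · intro y hy
        simp only [mem_iInter, mem_closedBall] at hy ⊢
        intro k
        have : 0 < ε0 / ((k:ℝ) + 1) := by positivity
        simp only [hbk]; linarith
    have htendμ : Tendsto (fun k => μ (closedBall x (bk k))) atTop
        (nhds (μ (closedBall x r))) := by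
      have := tendsto_measure_iInter_atTop (μ := μ)
        (fun k => (measurableSet_closedBall).nullMeasurableSet) hbk_anti
        ⟨0, by
          refine (lt_of_le_of_lt (measure_mono ?_)
            (isCompact_closedBall x (r + ε0)).measure_lt_top).ne
          apply closedBall_subset_closedBall
          simp [hbk]⟩
      rw [hInter] at this
      exact this
    have hble : ∀ k, limsup A atTop ≤ μ (closedBall x (bk k)) := by
      intro k
      apply key
      · simp only [hbk]
        have : 0 < ε0 / ((k:ℝ) + 1) := by positivity
        linarith
      · simp only [hbk]
        have h1 : ε0 / ((k:ℝ) + 1) ≤ ε0 / 1 := by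
          apply div_le_div_of_nonneg_left hε0.le one_pos
          have : (0:ℝ) ≤ k := Nat.cast_nonneg k
          linarith
        simpa using h1
    have hcb_eq : μ (closedBall x r) ≤ μ (ball x r) := by
      calc μ (closedBall x r) = μ (ball x r ∪ sphere x r) := by rw [ball_union_sphere]
        _ ≤ μ (ball x r) + μ (sphere x r) := measure_union_le _ _
        _ = μ (ball x r) := by rw [hnullr, add_zero]
    exact (ge_of_tendsto htendμ (Eventually.of_forall hble)).trans hcb_eq
  -- Claim B (ii) : μ (ball x s) ≤ liminf B
  have hlb : μ (ball x s) ≤ liminf B atTop := by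
    have key : ∀ a, 0 < a → a < s → μ (closedBall x a) ≤ liminf B atTop := by
      intro a ha0 has
      obtain ⟨φ, φc, φcs, φ0, φ1, φone, φzero⟩ := testfun x a s ha0 has
      have hts : tsupport φ ⊆ closedBall x s := by
        refine (closure_minimal ?_ isClosed_closedBall)
        intro y hy
        by_contra hyb
        exact hy (φzero y (fun h => hyb (ball_subset_closedBall h)))
      have htend := hconv φ φc φcs (hts.trans ((closedBall_subset_closedBall hsr.le).trans hball))
      have hj : ∀ j, ENNReal.ofReal (∫ y, φ y ∂(μs j)) ≤ B j := by
        intro j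
        haveI := hμs j
        have hs2 := (sandwich (μs j) x a s has.le φ φc φcs φ0 φ1 φone φzero).2
        calc ENNReal.ofReal (∫ y, φ y ∂(μs j))
            ≤ ENNReal.ofReal ((μs j (ball x s)).toReal) := ENNReal.ofReal_le_ofReal hs2
          _ ≤ B j := ENNReal.ofReal_toReal_le
      have hlim : Tendsto (fun j => ENNReal.ofReal (∫ y, φ y ∂(μs j))) atTop
          (nhds (ENNReal.ofReal (∫ y, φ y ∂μ))) :=
        (ENNReal.continuous_ofReal.tendsto _).comp htend
      calc μ (closedBall x a)
          = ENNReal.ofReal ((μ (closedBall x a)).toReal) := by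
            rw [ENNReal.ofReal_toReal]
            refine (lt_of_le_of_lt (measure_mono ?_)
              (isCompact_closedBall x r).measure_lt_top).ne
            exact closedBall_subset_closedBall (by linarith)
        _ ≤ ENNReal.ofReal (∫ y, φ y ∂μ) :=
            ENNReal.ofReal_le_ofReal (sandwich μ x a s has.le φ φc φcs φ0 φ1 φone φzero).1
        _ = liminf (fun j => ENNReal.ofReal (∫ y, φ y ∂(μs j))) atTop := hlim.liminf_eq.symm
        _ ≤ liminf B atTop := liminf_le_liminf (Eventually.of_forall hj)
    set ak : ℕ → ℝ := fun k => s - s / (k + 2) with hak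
    have hak_mem : ∀ k, 0 < ak k ∧ ak k < s := by
      intro k
      constructor
      · simp only [hak]
        have h1 : s / ((k:ℝ) + 2) < s / 1 := by
          apply div_lt_div_of_pos_left hs one_pos
          have : (0:ℝ) ≤ k := Nat.cast_nonneg k
          linarith
        simp only [div_one] at h1
        have h2 : 0 < s / ((k:ℝ) + 2) := by positivity
        linarith
      · simp only [hak]
        have : 0 < s / ((k:ℝ) + 2) := by positivity
        linarith
    have hUnion : ⋃ k, closedBall x (ak k) = ball x s := by
      apply Subset.antisymm
      · refine iUnion_subset fun k => ?_
        intro y hy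
        simp only [mem_closedBall] at hy
        exact mem_ball.2 (lt_of_le_of_lt hy (hak_mem k).2)
      · intro y hy
        simp only [mem_ball] at hy
        have htend : Tendsto ak atTop (nhds s) := by
          have h0 : Tendsto (fun k : ℕ => ((k:ℝ) + 2)) atTop atTop := by
            apply tendsto_atTop_add_const_right
            exact tendsto_natCast_atTop_atTop
          have h1 : Tendsto (fun k : ℕ => s / ((k:ℝ) + 2)) atTop (nhds 0) :=
            Tendsto.div_atTop tendsto_const_nhds h0
          have h2 : Tendsto (fun k : ℕ => s - s / ((k:ℝ) + 2)) atTop (nhds (s - 0)) :=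
            (tendsto_const_nhds (x := s)).sub h1
          simpa [hak] using h2
        have : ∀ᶠ k in atTop, dist y x < ak k := htend.eventually (eventually_gt_nhds hy)
        obtain ⟨k, hk⟩ := this.exists
        exact mem_iUnion.2 ⟨k, mem_closedBall.2 hk.le⟩
    have hmono : Monotone fun k => closedBall x (ak k) := by
      intro k m hkm
      apply closedBall_subset_closedBall
      simp only [hak]
      have h1 : (k:ℝ) + 2 ≤ (m:ℝ) + 2 := by exact_mod_cast by omega
      have := div_le_div_of_nonneg_left hs.le (by positivity) h1
      linarith
    have htendμ : Tendsto (fun k => μ (closedBall x (ak k))) atTop (nhds (μ (ball x s))) := by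
      have := tendsto_measure_iUnion_atTop (μ := μ) hmono
      rw [hUnion] at this
      exact this
    exact le_of_tendsto htendμ (Eventually.of_forall fun k =>
      key (ak k) (hak_mem k).1 (hak_mem k).2)
  -- combine in ℝ≥0∞
  have hsub : μ (ball x s) ≤ μ (ball x r) := measure_mono (ball_subset_ball hsr.le)
  have hμrfin : μ (ball x r) ≠ ⊤ :=
    (lt_of_le_of_lt (measure_mono ball_subset_closedBall)
      (isCompact_closedBall x r).measure_lt_top).ne
  set D : ℝ≥0∞ := μ (ball x r) - μ (ball x s) with hD
  have hX : liminf (fun j => A j - B j) atTop ≤ D := by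
    apply ENNReal.le_sub_of_add_le_right (ne_top_of_le_ne_top hμrfin hsub)
    calc liminf (fun j => A j - B j) atTop + μ (ball x s)
        ≤ liminf (fun j => A j - B j) atTop + liminf B atTop := by exact add_le_add le_rfl hlb
      _ ≤ liminf (fun j => (A j - B j) + B j) atTop := ennreal_le_liminf_add _ _
      _ = liminf A atTop := by
          apply liminf_congr
          exact Eventually.of_forall fun j => tsub_add_cancel_of_le (hBA j)
      _ ≤ limsup A atTop := liminf_le_limsup
      _ ≤ μ (ball x r) := hub
  have hGhat : ∫⁻ t in Ioc s r,
      liminf (fun j => ENNReal.ofReal (g j t)) atTop ≤ D := by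
    calc ∫⁻ t in Ioc s r, liminf (fun j => ENNReal.ofReal (g j t)) atTop
        ≤ liminf (fun j => ∫⁻ t in Ioc s r, ENNReal.ofReal (g j t)) atTop :=
          lintegral_liminf_le fun j => (hgm j).ennreal_ofReal
      _ ≤ liminf (fun j => A j - B j) atTop :=
          liminf_le_liminf (Eventually.of_forall hclaimA)
      _ ≤ D := hX
  -- back to the reals
  have hDfin : D ≠ ⊤ := by
    simp only [hD]
    exact (tsub_le_self.trans_lt hμrfin.lt_top).ne
  -- final step back to the reals
  have hrhs : (μ (ball x r)).toReal - (μ (ball x s)).toReal = D.toReal :=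
    (ENNReal.toReal_sub_of_le hsub hμrfin).symm
  rw [hrhs]
  by_cases hGint : IntervalIntegrable G volume s r
  · have hGnn : ∀ t, 0 ≤ G t := by
      intro t
      rw [hG t, liminf_eq]
      by_cases hbdd : BddAbove {a : ℝ | ∀ᶠ j in atTop, a ≤ g j t}
      · exact le_csSup hbdd (Eventually.of_forall fun j => hg0 j t)
      · rw [Real.sSup_of_not_bddAbove hbdd]
    have hGon : IntegrableOn G (Ioc s r) volume :=
      (intervalIntegrable_iff_integrableOn_Ioc_of_le hsr.le).1 hGint
    have heq1 : ∫ t in s..r, G t = ∫ t in Ioc s r, G t :=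
      intervalIntegral.integral_of_le hsr.le
    have hof : ENNReal.ofReal (∫ t in Ioc s r, G t) ≤ D := by
      rw [ofReal_integral_eq_lintegral_ofReal hGon (Eventually.of_forall hGnn)]
      refine le_trans ?_ hGhat
      apply lintegral_mono
      intro t
      simp only []
      rw [hG t]
      exact ofReal_liminf_le _ (fun j => hg0 j t)
    rw [heq1]
    by_cases hneg : ∫ t in Ioc s r, G t ≤ 0
    · exact hneg.trans ENNReal.toReal_nonneg
    · push_neg at hneg
      calc ∫ t in Ioc s r, G t
          = (ENNReal.ofReal (∫ t in Ioc s r, G t)).toReal := by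
            rw [ENNReal.toReal_ofReal hneg.le]
        _ ≤ D.toReal := ENNReal.toReal_mono hDfin hof
  · rw [intervalIntegral.integral_undef hGint]
    exact ENNReal.toReal_nonneg
end

section
/- Let K ⊆ ℝ^{n+1} be a compact set with H^n(K) < ∞, let γ : S^1 → ℝ^{n+1} be a smooth embedded closed curve with K ∩ γ(S^1) = ∅, and suppose there exist ε > 0 and a diffeomorphism Φ : S^1 × D_ε → U from S^1 × D_ε (D_ε the open n-disk of radius ε) onto an open neighborhood U of γ(S^1) with Φ|_{S^1×{0}} = γ. If K_j is a sequence of sets such that for every y ∈ D_ε and every j, K_j intersects the curve Φ(S^1 × {y}), then liminf_j H^n(K_j ∩ U) ≥ ω_n ε^n / L^n, where L is the Lipschitz constant of the projection π = pr_2 ∘ Φ^{−1} : U → D_ε. -/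
open Set MeasureTheory Metric Filter
open scoped ENNReal NNReal

/-- The volume of the unit ball in `ℝ^n`. -/
noncomputable def unitBallVol (n : ℕ) : ℝ :=
  (volume (ball (0 : EuclideanSpace ℝ (Fin n)) 1)).toReal

/-- Lebesgue measure is bounded above by the `n`-dimensional Hausdorff measure
on `EuclideanSpace ℝ (Fin n)`. -/
lemma volume_le_hausdorffMeasure_aux (n : ℕ) (s : Set (EuclideanSpace ℝ (Fin n)))
    (hs : MeasurableSet s) : volume s ≤ μH[(n : ℝ)] s := by
  have hmp := EuclideanSpace.volume_preserving_symm_measurableEquiv_toLp (Fin n)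
  have h1 : volume s = volume ((MeasurableEquiv.toLp 2 (Fin n → ℝ)).symm '' s) := by
    rw [MeasurableEquiv.image_eq_preimage_symm]
    exact ((hmp.symm (MeasurableEquiv.toLp 2 (Fin n → ℝ)).symm).measure_preimage
      hs.nullMeasurableSet).symm
  have h2 : (volume : Measure (Fin n → ℝ)) = μH[(n : ℝ)] := by
    have := MeasureTheory.hausdorffMeasure_pi_real (ι := Fin n)
    rw [Fintype.card_fin] at this
    exact this.symm
  rw [h1, h2]
  have hlip : LipschitzWith 1 (MeasurableEquiv.toLp 2 (Fin n → ℝ)).symm :=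
    PiLp.lipschitzWith_ofLp 2 _
  calc μH[(n:ℝ)] ((MeasurableEquiv.toLp 2 (Fin n → ℝ)).symm '' s)
      ≤ (1 : ℝ≥0∞) ^ (n : ℝ) * μH[(n:ℝ)] s :=
        hlip.hausdorffMeasure_image_le (by positivity) s
    _ = μH[(n:ℝ)] s := by simp

/-- `ω_n ε^n` as the volume of the ball of radius `ε`. -/
lemma ofReal_unitBallVol_mul_aux (n : ℕ) (ε : ℝ) (hε : 0 < ε) :
    ENNReal.ofReal (unitBallVol n * ε ^ n) =
      volume (ball (0 : EuclideanSpace ℝ (Fin n)) ε) := by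
  rcases Nat.eq_zero_or_pos n with rfl | hn
  · have huniv : ∀ r : ℝ, 0 < r → (ball (0 : EuclideanSpace ℝ (Fin 0)) r) = univ := by
      intro r hr; ext x
      simp [Subsingleton.elim x (0 : EuclideanSpace ℝ (Fin 0)), hr]
    have hv1 : volume (univ : Set (EuclideanSpace ℝ (Fin 0))) = 1 := by
      rw [← ((EuclideanSpace.volume_preserving_symm_measurableEquiv_toLp (Fin 0)).symm
          (MeasurableEquiv.toLp 2 (Fin 0 → ℝ)).symm).measure_preimage
          MeasurableSet.univ.nullMeasurableSet]
      simp [MeasureTheory.volume_pi]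
    rw [huniv ε hε, hv1, unitBallVol, huniv 1 one_pos, hv1]
    simp
  · haveI : Nonempty (Fin n) := ⟨⟨0, hn⟩⟩
    haveI : Nontrivial (EuclideanSpace ℝ (Fin n)) := inferInstance
    rw [Measure.addHaar_ball _ _ hε.le, finrank_euclideanSpace_fin, mul_comm (unitBallVol n),
      ENNReal.ofReal_mul (by positivity : (0:ℝ) ≤ ε ^ n), unitBallVol,
      ENNReal.ofReal_toReal measure_ball_lt_top.ne]

/-- Step two of the proof of Theorem 2: if each `K_j` meets every parallel curve
`Φ(S¹ × {y})`, `y ∈ D_ε`, of a tubular neighborhood `U` of the embedded curve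
`γ` avoiding `K`, then `liminf_j H^n(K_j ∩ U) ≥ ω_n ε^n / L^n`, where `L` is the
Lipschitz constant of the projection `π = pr₂ ∘ Φ⁻¹`. -/
theorem stmt_8 (n : ℕ) (K : Set (EuclideanSpace ℝ (Fin (n + 1))))
    (hK : IsCompact K) (hKfin : μH[(n : ℝ)] K ≠ ⊤)
    (γ : Metric.sphere (0 : EuclideanSpace ℝ (Fin 2)) 1 → EuclideanSpace ℝ (Fin (n + 1)))
    (hγc : Continuous γ) (hγi : Function.Injective γ)
    (hKγ : K ∩ Set.range γ = ∅)
    (ε : ℝ) (hε : 0 < ε)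
    (U : Set (EuclideanSpace ℝ (Fin (n + 1)))) (hU : IsOpen U)
    (Φ : Metric.sphere (0 : EuclideanSpace ℝ (Fin 2)) 1 × EuclideanSpace ℝ (Fin n) →
      EuclideanSpace ℝ (Fin (n + 1)))
    (hΦc : Continuous Φ)
    (hΦinj : Set.InjOn Φ (Set.univ ×ˢ ball (0 : EuclideanSpace ℝ (Fin n)) ε))
    (hΦim : Φ '' (Set.univ ×ˢ ball (0 : EuclideanSpace ℝ (Fin n)) ε) = U)
    (hΦγ : ∀ θ, Φ (θ, 0) = γ θ)
    (π : EuclideanSpace ℝ (Fin (n + 1)) → EuclideanSpace ℝ (Fin n))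
    (L : ℝ≥0) (hL : 0 < L) (hπ : LipschitzOnWith L π U)
    (hπΦ : ∀ θ, ∀ y ∈ ball (0 : EuclideanSpace ℝ (Fin n)) ε, π (Φ (θ, y)) = y)
    (Kj : ℕ → Set (EuclideanSpace ℝ (Fin (n + 1))))
    (hspan : ∀ j, ∀ y ∈ ball (0 : EuclideanSpace ℝ (Fin n)) ε, ∃ θ, Φ (θ, y) ∈ Kj j) :
    ENNReal.ofReal (unitBallVol n * ε ^ n / (L : ℝ) ^ n) ≤
      liminf (fun j => μH[(n : ℝ)] (Kj j ∩ U)) atTop := by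
  set B : Set (EuclideanSpace ℝ (Fin n)) := ball 0 ε with hB
  -- each fiber is hit, so `B ⊆ π '' (Kj j ∩ U)`
  have hsub : ∀ j, B ⊆ π '' (Kj j ∩ U) := by
    intro j y hy
    obtain ⟨θ, hθ⟩ := hspan j y hy
    have hU' : Φ (θ, y) ∈ U := by
      rw [← hΦim]; exact ⟨(θ, y), ⟨mem_univ _, hy⟩, rfl⟩
    exact ⟨Φ (θ, y), ⟨hθ, hU'⟩, hπΦ θ y hy⟩
  have key : ∀ j, ENNReal.ofReal (unitBallVol n * ε ^ n / (L : ℝ) ^ n) ≤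
      μH[(n : ℝ)] (Kj j ∩ U) := by
    intro j
    have h1 : volume B ≤ μH[(n : ℝ)] (π '' (Kj j ∩ U)) :=
      (volume_le_hausdorffMeasure_aux n B measurableSet_ball).trans (measure_mono (hsub j))
    have h2 : μH[(n : ℝ)] (π '' (Kj j ∩ U)) ≤ (L : ℝ≥0∞) ^ n * μH[(n : ℝ)] (Kj j ∩ U) := by
      have h2' : μH[(n : ℝ)] (π '' (Kj j ∩ U)) ≤
          (L : ℝ≥0∞) ^ ((n : ℕ) : ℝ) * μH[(n : ℝ)] (Kj j ∩ U) :=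
        (hπ.mono Set.inter_subset_right).hausdorffMeasure_image_le (Nat.cast_nonneg n)
      rwa [ENNReal.rpow_natCast] at h2'
    have h3 : ENNReal.ofReal (unitBallVol n * ε ^ n) ≤
        μH[(n : ℝ)] (Kj j ∩ U) * (L : ℝ≥0∞) ^ n := by
      rw [ofReal_unitBallVol_mul_aux n ε hε]
      exact (h1.trans h2).trans_eq (mul_comm _ _)
    have h4 : ENNReal.ofReal (unitBallVol n * ε ^ n / (L : ℝ) ^ n) =
        ENNReal.ofReal (unitBallVol n * ε ^ n) / (L : ℝ≥0∞) ^ n := by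
      rw [ENNReal.ofReal_div_of_pos (by positivity), ENNReal.ofReal_pow (by positivity),
        ENNReal.ofReal_coe_nnreal]
    rw [h4]
    exact ENNReal.div_le_of_le_mul h3
  exact Filter.le_liminf_of_le (by isBoundedDefault) (Eventually.of_forall key)
end

section
/- Let Q_0 ⊆ ℝ^n be a closed cube and U_0 ⊂⊂ int Q_0 a closed ball. Then there exists a Lipschitz map f_0 : ℝ^n → ℝ^n such that f_0 = Id on ℝ^n \ Q_0, f_0(U_0) = Q_0, and f_0(Q_0 \ int U_0) ⊆ ∂Q_0. -/
open Set Metric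
open scoped NNReal

set_option linter.unusedSectionVars false
set_option linter.unusedVariables false
set_option maxHeartbeats 1000000



lemma coord_abs_le_norm {n : ℕ} (u : EuclideanSpace ℝ (Fin n)) (i : Fin n) : |u i| ≤ ‖u‖ := by
  rw [EuclideanSpace.norm_eq]
  rw [show |u i| = Real.sqrt (|u i|^2) by rw [Real.sqrt_sq_eq_abs, abs_abs]]
  apply Real.sqrt_le_sqrt
  calc |u i|^2 = ‖u i‖^2 := by rw [Real.norm_eq_abs]
  _ ≤ ∑ j, ‖u j‖^2 := Finset.single_le_sum (f := fun j => ‖u j‖^2)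
      (fun j _ => by positivity) (Finset.mem_univ i)

noncomputable def pgx (n : ℕ) [NeZero n] (a : ℝ) (d : Fin n → ℝ)
    (v : EuclideanSpace ℝ (Fin n)) : ℝ :=
  Finset.univ.sup' Finset.univ_nonempty fun i => max (v i / (a - d i)) (-(v i) / (a + d i))

section
variable {n : ℕ} [NeZero n] {a ρ : ℝ} {d : Fin n → ℝ}

lemma pg_den (hρ : 0 < ρ) (hden : ∀ i, |d i| + ρ < a) (i : Fin n) :
    ρ < a - d i ∧ ρ < a + d i ∧ a - d i ≤ 2*a ∧ a + d i ≤ 2*a := by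
  have h1 := le_abs_self (d i)
  have h2 := neg_abs_le (d i)
  have h3 := hden i
  have h4 := abs_nonneg (d i)
  refine ⟨by linarith, by linarith, by linarith, by linarith⟩

lemma pg_le_norm (hρ : 0 < ρ) (hden : ∀ i, |d i| + ρ < a) (v : EuclideanSpace ℝ (Fin n)) :
    pgx n a d v ≤ ‖v‖ / ρ := by
  apply Finset.sup'_le
  intro i _
  obtain ⟨hd1, hd2, hd3, hd4⟩ := pg_den hρ hden i
  have hnv := coord_abs_le_norm v i
  have habs : (0:ℝ) ≤ ‖v‖ := norm_nonneg v
  have h1 : v i / (a - d i) ≤ ‖v‖ / ρ := by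
    calc v i / (a - d i) ≤ |v i| / (a - d i) := by
          exact div_le_div_of_nonneg_right (le_abs_self _) (by linarith)
    _ ≤ ‖v‖ / ρ := by
          apply div_le_div₀ ((abs_nonneg _).trans hnv) hnv hρ (by linarith)
  have h2 : -(v i) / (a + d i) ≤ ‖v‖ / ρ := by
    calc -(v i) / (a + d i) ≤ |v i| / (a + d i) := by
          exact div_le_div_of_nonneg_right (neg_le_abs _) (by linarith)
    _ ≤ ‖v‖ / ρ := by
          apply div_le_div₀ ((abs_nonneg _).trans hnv) hnv hρ (by linarith)
  exact max_le h1 h2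

lemma pg_nonneg (hρ : 0 < ρ) (hden : ∀ i, |d i| + ρ < a) (v : EuclideanSpace ℝ (Fin n)) :
    0 ≤ pgx n a d v := by
  obtain ⟨i⟩ := (inferInstance : Nonempty (Fin n))
  obtain ⟨hd1, hd2, hd3, hd4⟩ := pg_den hρ hden i
  refine le_trans ?_ (Finset.le_sup' _ (Finset.mem_univ i))
  rcases le_or_gt 0 (v i) with h | h
  · exact le_max_of_le_left (div_nonneg h (by linarith))
  · exact le_max_of_le_right (div_nonneg (by linarith) (by linarith))

lemma pg_abs_le (hρ : 0 < ρ) (hden : ∀ i, |d i| + ρ < a) (v : EuclideanSpace ℝ (Fin n))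
    (i : Fin n) : |v i| ≤ 2*a * pgx n a d v := by
  obtain ⟨hd1, hd2, hd3, hd4⟩ := pg_den hρ hden i
  have h2a : (0:ℝ) < 2*a := by have := abs_nonneg (d i); linarith
  have key : |v i| / (2*a) ≤ pgx n a d v := by
    refine le_trans ?_ (Finset.le_sup' _ (Finset.mem_univ i))
    rcases le_or_gt 0 (v i) with h | h
    · refine le_max_of_le_left ?_
      rw [abs_of_nonneg h]
      apply div_le_div₀ h (le_refl _) (by linarith) hd3
    · refine le_max_of_le_right ?_
      rw [abs_of_neg h]
      apply div_le_div₀ (by linarith) (le_refl _) (by linarith) hd4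
  calc |v i| = 2*a * (|v i| / (2*a)) := by field_simp [(show (0:ℝ) < a by linarith).ne']
  _ ≤ 2*a * pgx n a d v := by
      apply mul_le_mul_of_nonneg_left key (by linarith)

lemma pgx_zero : pgx n a d 0 = 0 := by
  unfold pgx
  have : ∀ i : Fin n, max ((0:EuclideanSpace ℝ (Fin n)) i / (a - d i)) (-((0:EuclideanSpace ℝ (Fin n)) i) / (a + d i)) = 0 := by
    intro i
    have h : (0:EuclideanSpace ℝ (Fin n)) i = 0 := rfl
    simp [h]
  simp only [this]
  exact Finset.sup'_const _ 0
lemma pgx_smul (t : ℝ) (ht : 0 ≤ t) (v : EuclideanSpace ℝ (Fin n)) :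
    pgx n a d (t • v) = t * pgx n a d v := by
  have key : ∀ (s : ℝ), 0 ≤ s → ∀ w : EuclideanSpace ℝ (Fin n),
      pgx n a d (s • w) ≤ s * pgx n a d w := by
    intro s hs w
    apply Finset.sup'_le
    intro i _
    have h : (s • w) i = s * w i := rfl
    rw [h]
    have h1 : s * w i / (a - d i) = s * (w i / (a - d i)) := by ring
    have h2 : -(s * w i) / (a + d i) = s * (-(w i) / (a + d i)) := by ring
    rw [h1, h2, ← mul_max_of_nonneg _ _ hs]
    exact mul_le_mul_of_nonneg_left (Finset.le_sup'
      (f := fun i => max (w i / (a - d i)) (-(w i) / (a + d i))) (Finset.mem_univ i)) hs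
  rcases eq_or_lt_of_le ht with h | h
  · rw [← h, zero_smul, zero_mul, pgx_zero]
  · refine le_antisymm (key t ht v) ?_
    have h2 := key t⁻¹ (by positivity) (t • v)
    rw [inv_smul_smul₀ (ne_of_gt h)] at h2
    calc t * pgx n a d v ≤ t * (t⁻¹ * pgx n a d (t • v)) := by
          exact mul_le_mul_of_nonneg_left h2 ht
    _ = pgx n a d (t • v) := by field_simp


lemma pg_norm_le (hρ : 0 < ρ) (hden : ∀ i, |d i| + ρ < a) (v : EuclideanSpace ℝ (Fin n)) :
    ‖v‖ ≤ 2*a*n * pgx n a d v := by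
  have h2a : (0:ℝ) < 2*a := by have := abs_nonneg (d 0); have := hρ; have := hden 0; linarith
  have hp := pg_nonneg hρ hden v
  have hn : (1:ℝ) ≤ n := by
    have := Nat.one_le_iff_ne_zero.mpr (NeZero.ne n)
    exact_mod_cast this
  rw [EuclideanSpace.norm_eq]
  rw [show (2*a*n * pgx n a d v : ℝ) = Real.sqrt ((2*a*n * pgx n a d v)^2) by
    rw [Real.sqrt_sq (by positivity)]]
  apply Real.sqrt_le_sqrt
  calc ∑ i, ‖v i‖^2 ≤ ∑ _i : Fin n, (2*a*pgx n a d v)^2 := by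
        apply Finset.sum_le_sum
        intro i _
        rw [Real.norm_eq_abs]
        have := pg_abs_le hρ hden v i
        have habs := abs_nonneg (v i)
        nlinarith
  _ = n * (2*a*pgx n a d v)^2 := by
        rw [Finset.sum_const, Finset.card_univ, Fintype.card_fin]; ring
  _ ≤ (2*a*n * pgx n a d v)^2 := by nlinarith

lemma pg_lip (hρ : 0 < ρ) (hden : ∀ i, |d i| + ρ < a) (v w : EuclideanSpace ℝ (Fin n)) :
    pgx n a d v ≤ pgx n a d w + ‖v - w‖ / ρ := by
  apply Finset.sup'_le
  intro i _
  obtain ⟨hd1, hd2, hd3, hd4⟩ := pg_den hρ hden i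
  have hc : |v i - w i| ≤ ‖v - w‖ := coord_abs_le_norm (v - w) i
  have hle : Finset.univ.sup' Finset.univ_nonempty
      (fun i => max (w i / (a - d i)) (-(w i) / (a + d i))) = pgx n a d w := rfl
  have hw : max (w i / (a - d i)) (-(w i) / (a + d i)) ≤ pgx n a d w := by
    rw [← hle]
    exact Finset.le_sup' (f := fun i => max (w i / (a - d i)) (-(w i) / (a + d i)))
      (Finset.mem_univ i)
  have key1 : v i / (a - d i) ≤ w i / (a - d i) + ‖v - w‖ / ρ := by
    have h1 : v i / (a - d i) - w i / (a - d i) = (v i - w i) / (a - d i) := by ring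
    have h2 : (v i - w i) / (a - d i) ≤ |v i - w i| / (a - d i) :=
      div_le_div_of_nonneg_right (le_abs_self _) (by linarith)
    have h3 : |v i - w i| / (a - d i) ≤ ‖v - w‖ / ρ :=
      div_le_div₀ ((abs_nonneg _).trans hc) hc hρ (by linarith)
    linarith
  have key2 : -(v i) / (a + d i) ≤ -(w i) / (a + d i) + ‖v - w‖ / ρ := by
    have h1 : -(v i) / (a + d i) - -(w i) / (a + d i) = -(v i - w i) / (a + d i) := by ring
    have h2 : -(v i - w i) / (a + d i) ≤ |v i - w i| / (a + d i) :=
      div_le_div_of_nonneg_right (neg_le_abs _) (by linarith)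
    have h3 : |v i - w i| / (a + d i) ≤ ‖v - w‖ / ρ :=
      div_le_div₀ ((abs_nonneg _).trans hc) hc hρ (by linarith)
    linarith
  have g1 : w i / (a - d i) ≤ pgx n a d w := le_trans (le_max_left _ _) hw
  have g2 : -(w i) / (a + d i) ≤ pgx n a d w := le_trans (le_max_right _ _) hw
  exact max_le (by linarith) (by linarith)

lemma pg_le_one_iff (hρ : 0 < ρ) (hden : ∀ i, |d i| + ρ < a) (v : EuclideanSpace ℝ (Fin n)) :
    pgx n a d v ≤ 1 ↔ ∀ i, |v i + d i| ≤ a := by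
  rw [pgx, Finset.sup'_le_iff]
  constructor
  · intro h i
    obtain ⟨hd1, hd2, hd3, hd4⟩ := pg_den hρ hden i
    have := h i (Finset.mem_univ i)
    rw [max_le_iff, div_le_one (by linarith), div_le_one (by linarith)] at this
    rw [abs_le]; constructor <;> linarith [this.1, this.2]
  · intro h i _
    obtain ⟨hd1, hd2, hd3, hd4⟩ := pg_den hρ hden i
    obtain ⟨h1, h2⟩ := abs_le.mp (h i)
    rw [max_le_iff, div_le_one (by linarith), div_le_one (by linarith)]
    constructor <;> linarith

lemma pg_lt_one_iff (hρ : 0 < ρ) (hden : ∀ i, |d i| + ρ < a) (v : EuclideanSpace ℝ (Fin n)) :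
    pgx n a d v < 1 ↔ ∀ i, |v i + d i| < a := by
  rw [pgx, Finset.sup'_lt_iff]
  constructor
  · intro h i
    obtain ⟨hd1, hd2, hd3, hd4⟩ := pg_den hρ hden i
    have := h i (Finset.mem_univ i)
    rw [max_lt_iff, div_lt_one (by linarith), div_lt_one (by linarith)] at this
    rw [abs_lt]; constructor <;> linarith [this.1, this.2]
  · intro h i _
    obtain ⟨hd1, hd2, hd3, hd4⟩ := pg_den hρ hden i
    obtain ⟨h1, h2⟩ := abs_lt.mp (h i)
    rw [max_lt_iff, div_lt_one (by linarith), div_lt_one (by linarith)]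
    constructor <;> linarith
lemma min_lip (r x y : ℝ) : |min r x - min r y| ≤ |x - y| := by
  have key : ∀ u u' : ℝ, min r u - min r u' ≤ |u - u'| := by
    intro u u'
    rcases le_total r u' with h|h
    · have h1 : min r u ≤ r := min_le_left _ _
      have h2 := abs_nonneg (u - u')
      rw [min_eq_left h]; linarith
    · rw [min_eq_right h]
      have h1 : min r u ≤ u := min_le_right _ _
      have h2 := le_abs_self (u - u')
      linarith
  have h1 := key x y
  have h2 := key y x
  rw [abs_sub_comm y x] at h2
  rw [abs_le]; constructor <;> linarith

noncomputable def Fm (n : ℕ) [NeZero n] (a ρ : ℝ) (d : Fin n → ℝ)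
    (v : EuclideanSpace ℝ (Fin n)) : EuclideanSpace ℝ (Fin n) :=
  ((min ρ ‖v‖) / (ρ * min 1 (pgx n a d v))) • v

lemma pg_pos (hρ : 0 < ρ) (hden : ∀ i, |d i| + ρ < a) {v : EuclideanSpace ℝ (Fin n)}
    (hv : v ≠ 0) : 0 < pgx n a d v := by
  have h1 := pg_norm_le hρ hden v
  have h2 : 0 < ‖v‖ := norm_pos_iff.mpr hv
  have h3 := pg_nonneg hρ hden v
  rcases eq_or_lt_of_le h3 with h|h
  · rw [← h] at h1; simp at h1; exact absurd h1 hv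
  · exact h

lemma Fm_id (hρ : 0 < ρ) (hden : ∀ i, |d i| + ρ < a) {v : EuclideanSpace ℝ (Fin n)}
    (hv : 1 ≤ pgx n a d v) : Fm n a ρ d v = v := by
  have h1 := pg_le_norm hρ hden v
  have h2 : ρ ≤ ‖v‖ := by
    have h3 : ρ * 1 ≤ ρ * pgx n a d v := by nlinarith
    have h4 : ρ * pgx n a d v ≤ ‖v‖ := by
      rw [le_div_iff₀ hρ] at h1
      nlinarith [pg_nonneg hρ hden v]
    linarith
  unfold Fm
  rw [min_eq_left h2, min_eq_left hv, mul_one, div_self (ne_of_gt hρ), one_smul]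

lemma Fm_inner (hρ : 0 < ρ) (hden : ∀ i, |d i| + ρ < a) {v : EuclideanSpace ℝ (Fin n)}
    (hv : pgx n a d v ≤ 1) :
    Fm n a ρ d v = ((min ρ ‖v‖) / (ρ * pgx n a d v)) • v := by
  unfold Fm
  rw [min_eq_right hv]

lemma Fm_norm_le (hρ : 0 < ρ) (hden : ∀ i, |d i| + ρ < a) {v : EuclideanSpace ℝ (Fin n)}
    (hv : pgx n a d v ≤ 1) : ‖Fm n a ρ d v‖ ≤ (2*a*n/ρ) * ‖v‖ := by
  by_cases h0 : v = 0
  · subst h0; unfold Fm; simp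
  · have hP := pg_pos hρ hden h0
    have hK := pg_norm_le hρ hden v
    rw [Fm_inner hρ hden hv, norm_smul, Real.norm_eq_abs]
    have hcoef : 0 ≤ min ρ ‖v‖ / (ρ * pgx n a d v) := by positivity
    rw [abs_of_nonneg hcoef]
    have h1 : min ρ ‖v‖ / (ρ * pgx n a d v) ≤ 2*a*n/ρ := by
      rw [div_le_div_iff₀ (by positivity) hρ]
      have h2 : min ρ ‖v‖ ≤ ‖v‖ := min_le_right _ _
      nlinarith
    apply mul_le_mul_of_nonneg_right h1 (norm_nonneg v)
lemma Fm_lip_inner (hρ : 0 < ρ) (hden : ∀ i, |d i| + ρ < a)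
    {v w : EuclideanSpace ℝ (Fin n)} (hv : pgx n a d v ≤ 1) (hw : pgx n a d w ≤ 1) :
    ‖Fm n a ρ d v - Fm n a ρ d w‖ ≤
      (2*(2*a*n)/ρ + (2*a*n)^2/ρ^2) * ‖v - w‖ := by
  set K := 2*a*n with hKdef
  have h2a : (0:ℝ) < 2*a := by have := abs_nonneg (d 0); have := hden 0; linarith
  have hn : (1:ℝ) ≤ n := by exact_mod_cast Nat.one_le_iff_ne_zero.mpr (NeZero.ne n)
  have hK : 0 < K := by positivity
  have hL0 : (0:ℝ) ≤ 2*K/ρ + K^2/ρ^2 := by positivity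
  by_cases h0v : v = 0
  · subst h0v
    have : Fm n a ρ d (0:EuclideanSpace ℝ (Fin n)) = 0 := by unfold Fm; simp
    rw [this, zero_sub, norm_neg, zero_sub, norm_neg]
    calc ‖Fm n a ρ d w‖ ≤ (K/ρ) * ‖w‖ := Fm_norm_le hρ hden hw
    _ ≤ (2*K/ρ + K^2/ρ^2) * ‖w‖ := by
        have h1 : 0 ≤ K/ρ := div_nonneg hK.le hρ.le
        have h2 : 0 ≤ K^2/ρ^2 := div_nonneg (sq_nonneg K) (sq_nonneg ρ)
        have hb : 2*K/ρ = 2*(K/ρ) := by ring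
        have h3 : K/ρ ≤ 2*K/ρ + K^2/ρ^2 := by linarith
        exact mul_le_mul_of_nonneg_right h3 (norm_nonneg _)
  by_cases h0w : w = 0
  · subst h0w
    have h1 : Fm n a ρ d (0:EuclideanSpace ℝ (Fin n)) = 0 := by unfold Fm; simp
    rw [h1, sub_zero, sub_zero]
    calc ‖Fm n a ρ d v‖ ≤ (K/ρ) * ‖v‖ := Fm_norm_le hρ hden hv
    _ ≤ (2*K/ρ + K^2/ρ^2) * ‖v‖ := by
        have h1 : 0 ≤ K/ρ := div_nonneg hK.le hρ.le
        have h2 : 0 ≤ K^2/ρ^2 := div_nonneg (sq_nonneg K) (sq_nonneg ρ)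
        have hb : 2*K/ρ = 2*(K/ρ) := by ring
        have h3 : K/ρ ≤ 2*K/ρ + K^2/ρ^2 := by linarith
        exact mul_le_mul_of_nonneg_right h3 (norm_nonneg _)
  -- both nonzero
  set P := pgx n a d v with hPdef
  set P' := pgx n a d w with hP'def
  set A := min ρ ‖v‖ with hAdef
  set A' := min ρ ‖w‖ with hA'def
  set t := ‖v - w‖ with htdef
  have hP : 0 < P := pg_pos hρ hden h0v
  have hP' : 0 < P' := pg_pos hρ hden h0w
  have hA0 : 0 ≤ A := le_min hρ.le (norm_nonneg v)
  have hA'0 : 0 ≤ A' := le_min hρ.le (norm_nonneg w)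
  have hAK : A ≤ K * P := le_trans (min_le_right _ _) (pg_norm_le hρ hden v)
  have hwK : ‖w‖ ≤ K * P' := pg_norm_le hρ hden w
  have ht0 : 0 ≤ t := norm_nonneg _
  have hAA' : |A - A'| ≤ t := le_trans (min_lip ρ ‖v‖ ‖w‖)
      (by rw [htdef]; exact abs_norm_sub_norm_le v w)
  have hPP' : |P - P'| ≤ t / ρ := by
    rw [abs_le]
    constructor
    · have := pg_lip hρ hden w v
      rw [norm_sub_rev] at this
      linarith
    · have := pg_lip hρ hden v w
      linarith
  have hdecomp : Fm n a ρ d v - Fm n a ρ d w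
      = (A/(ρ*P)) • (v - w) + ((A/(ρ*P)) - (A'/(ρ*P'))) • w := by
    rw [Fm_inner hρ hden hv, Fm_inner hρ hden hw, ← hPdef, ← hP'def, ← hAdef, ← hA'def]
    module
  have hcoef0 : 0 ≤ A/(ρ*P) := div_nonneg hA0 (mul_pos hρ hP).le
  have hbound : ‖Fm n a ρ d v - Fm n a ρ d w‖
      ≤ (A/(ρ*P))*t + |A/(ρ*P) - A'/(ρ*P')| * ‖w‖ := by
    rw [hdecomp]
    calc ‖(A/(ρ*P)) • (v - w) + ((A/(ρ*P)) - (A'/(ρ*P'))) • w‖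
        ≤ ‖(A/(ρ*P)) • (v - w)‖ + ‖((A/(ρ*P)) - (A'/(ρ*P'))) • w‖ := norm_add_le _ _
    _ = (A/(ρ*P))*t + |A/(ρ*P) - A'/(ρ*P')| * ‖w‖ := by
        rw [norm_smul, norm_smul, Real.norm_eq_abs, Real.norm_eq_abs, abs_of_nonneg hcoef0]
  have hcoef : A/(ρ*P) ≤ K/ρ := by
    rw [div_le_div_iff₀ (mul_pos hρ hP) hρ]
    nlinarith
  have hdiff : |A/(ρ*P) - A'/(ρ*P')| ≤ (K*(t/ρ) + t)/(ρ*P') := by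
    have heq : A/(ρ*P) - A'/(ρ*P') = (A*(P' - P) + P*(A - A'))/(ρ*(P*P')) := by
      field_simp
      ring
    rw [heq, abs_div, abs_of_pos (mul_pos hρ (mul_pos hP hP'))]
    have hnum : |A*(P' - P) + P*(A - A')| ≤ P*(K*(t/ρ) + t) := by
      calc |A*(P' - P) + P*(A - A')| ≤ |A*(P' - P)| + |P*(A - A')| := abs_add_le _ _
      _ = A*|P' - P| + P*|A - A'| := by
          rw [abs_mul, abs_mul, abs_of_nonneg hA0, abs_of_nonneg hP.le]
      _ ≤ (K*P)*(t/ρ) + P*t := by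
          have e1 : |P' - P| ≤ t/ρ := by rw [abs_sub_comm]; exact hPP'
          have e2 : A*|P' - P| ≤ (K*P)*(t/ρ) :=
            mul_le_mul hAK e1 (abs_nonneg _) (mul_nonneg hK.le hP.le)
          have e3 : P*|A - A'| ≤ P*t := mul_le_mul_of_nonneg_left hAA' hP.le
          linarith
      _ = P*(K*(t/ρ) + t) := by ring
    calc |A*(P' - P) + P*(A - A')| / (ρ*(P*P')) ≤ (P*(K*(t/ρ) + t)) / (ρ*(P*P')) := by
          apply div_le_div_of_nonneg_right hnum (mul_pos hρ (mul_pos hP hP')).le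
    _ = (K*(t/ρ) + t)/(ρ*P') := by
          field_simp
  have hfinal : |A/(ρ*P) - A'/(ρ*P')| * ‖w‖ ≤ (K^2/ρ^2 + K/ρ)*t := by
    calc |A/(ρ*P) - A'/(ρ*P')| * ‖w‖ ≤ ((K*(t/ρ) + t)/(ρ*P'))*(K*P') :=
          mul_le_mul hdiff hwK (norm_nonneg _) (div_nonneg (add_nonneg (mul_nonneg hK.le (div_nonneg ht0 hρ.le)) ht0) (mul_pos hρ hP').le)
    _ = (K^2/ρ^2 + K/ρ)*t := by
          field_simp
  have h1 : (A/(ρ*P))*t ≤ (K/ρ)*t := mul_le_mul_of_nonneg_right hcoef ht0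
  calc ‖Fm n a ρ d v - Fm n a ρ d w‖ ≤ (A/(ρ*P))*t + |A/(ρ*P) - A'/(ρ*P')| * ‖w‖ := hbound
  _ ≤ (K/ρ)*t + (K^2/ρ^2 + K/ρ)*t := by linarith
  _ = (2*K/ρ + K^2/ρ^2) * t := by ring
lemma pgx_continuous (hρ : 0 < ρ) (hden : ∀ i, |d i| + ρ < a) :
    Continuous (fun v : EuclideanSpace ℝ (Fin n) => pgx n a d v) := by
  have : LipschitzWith (1/ρ).toNNReal (pgx n a d) := by
    apply LipschitzWith.of_dist_le_mul
    intro x y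
    rw [Real.dist_eq, Real.coe_toNNReal _ (by positivity), dist_eq_norm]
    rw [abs_le]
    constructor
    · have := pg_lip hρ hden y x
      rw [norm_sub_rev] at this
      have hb : 1/ρ * ‖x - y‖ = ‖x - y‖/ρ := by ring
      linarith
    · have := pg_lip hρ hden x y
      have hb : 1/ρ * ‖x - y‖ = ‖x - y‖/ρ := by ring
      linarith
  exact this.continuous

lemma Fm_lip (hρ : 0 < ρ) (hden : ∀ i, |d i| + ρ < a) (v w : EuclideanSpace ℝ (Fin n)) :
    ‖Fm n a ρ d v - Fm n a ρ d w‖ ≤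
      (2*(2*a*n)/ρ + (2*a*n)^2/ρ^2) * ‖v - w‖ := by
  set K := 2*a*n with hKdef
  set L := 2*K/ρ + K^2/ρ^2 with hLdef
  have h2a : (0:ℝ) < 2*a := by have := abs_nonneg (d 0); have := hden 0; linarith
  have hn : (1:ℝ) ≤ n := by exact_mod_cast Nat.one_le_iff_ne_zero.mpr (NeZero.ne n)
  have hK : 0 < K := by positivity
  have hρa : ρ < a := by have := abs_nonneg (d 0); have := hden 0; linarith
  have hK2 : 2*ρ ≤ K := by nlinarith
  have hL1 : 1 ≤ L := by
    have h1 : (2:ℝ) ≤ K/ρ := by rw [le_div_iff₀ hρ]; linarith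
    have hb : 2*K/ρ = 2*(K/ρ) := by ring
    have h2 : 0 ≤ K^2/ρ^2 := div_nonneg (sq_nonneg K) (sq_nonneg ρ)
    rw [hLdef, hb]
    linarith
  -- cross-region helper
  have cross : ∀ v w : EuclideanSpace ℝ (Fin n), pgx n a d v ≤ 1 → 1 ≤ pgx n a d w →
      ‖Fm n a ρ d v - Fm n a ρ d w‖ ≤ L * ‖v - w‖ := by
    intro v w hv hw
    have hcont : ContinuousOn (fun t : ℝ => pgx n a d (v + t • (w - v))) (Icc 0 1) := by
      apply Continuous.continuousOn
      exact (pgx_continuous hρ hden).comp (by fun_prop)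
    have h0 : (fun t : ℝ => pgx n a d (v + t • (w - v))) 0 = pgx n a d v := by
      simp
    have h1 : (fun t : ℝ => pgx n a d (v + t • (w - v))) 1 = pgx n a d w := by
      simp
    have hmem : (1:ℝ) ∈ Icc ((fun t : ℝ => pgx n a d (v + t • (w - v))) 0)
        ((fun t : ℝ => pgx n a d (v + t • (w - v))) 1) := by
      rw [h0, h1]; exact ⟨hv, hw⟩
    obtain ⟨t, ht01, htz⟩ := intermediate_value_Icc zero_le_one hcont hmem
    set z := v + t • (w - v) with hzdef
    have hz1 : pgx n a d z = 1 := htz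
    have hFz : Fm n a ρ d z = z := Fm_id hρ hden (le_of_eq hz1.symm)
    have hFw : Fm n a ρ d w = w := Fm_id hρ hden hw
    have hvz : v - z = t • (v - w) := by rw [hzdef]; module
    have hzw : z - w = (1 - t) • (v - w) := by rw [hzdef]; module
    have e1 : ‖v - z‖ = t * ‖v - w‖ := by
      rw [hvz, norm_smul, Real.norm_eq_abs, abs_of_nonneg ht01.1]
    have e2 : ‖z - w‖ = (1 - t) * ‖v - w‖ := by
      rw [hzw, norm_smul, Real.norm_eq_abs, abs_of_nonneg (by linarith [ht01.2])]
    have tri : ‖Fm n a ρ d v - Fm n a ρ d w‖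
        ≤ ‖Fm n a ρ d v - Fm n a ρ d z‖ + ‖Fm n a ρ d z - Fm n a ρ d w‖ :=
      norm_sub_le_norm_sub_add_norm_sub _ _ _
    have hin : ‖Fm n a ρ d v - Fm n a ρ d z‖ ≤ L * ‖v - z‖ :=
      Fm_lip_inner hρ hden hv (le_of_eq hz1)
    have hout : ‖Fm n a ρ d z - Fm n a ρ d w‖ = ‖z - w‖ := by rw [hFz, hFw]
    have hnn : 0 ≤ ‖v - w‖ := norm_nonneg _
    have ht1 : t ≤ 1 := ht01.2
    have ht0 : 0 ≤ t := ht01.1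
    calc ‖Fm n a ρ d v - Fm n a ρ d w‖ ≤ L * ‖v - z‖ + ‖z - w‖ := by linarith
    _ = L * (t * ‖v - w‖) + (1 - t) * ‖v - w‖ := by rw [e1, e2]
    _ ≤ L * (t * ‖v - w‖) + L * ((1 - t) * ‖v - w‖) := by
        have hu : 0 ≤ (1 - t) * ‖v - w‖ := mul_nonneg (by linarith) hnn
        nlinarith [mul_nonneg (sub_nonneg.mpr hL1) hu]
    _ = L * ‖v - w‖ := by ring
  rcases le_or_gt (pgx n a d v) 1 with hv | hv <;> rcases le_or_gt (pgx n a d w) 1 with hw | hw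
  · exact Fm_lip_inner hρ hden hv hw
  · exact cross v w hv hw.le
  · rw [norm_sub_rev, norm_sub_rev v w]
    exact cross w v hw hv.le
  · rw [Fm_id hρ hden hv.le, Fm_id hρ hden hw.le]
    nlinarith [mul_nonneg (sub_nonneg.mpr hL1) (norm_nonneg (v - w))]

lemma Fm_zero : Fm n a ρ d 0 = 0 := by unfold Fm; simp

lemma Fm_maps_ball (hρ : 0 < ρ) (hden : ∀ i, |d i| + ρ < a)
    {v : EuclideanSpace ℝ (Fin n)} (hv : ‖v‖ ≤ ρ) : pgx n a d (Fm n a ρ d v) ≤ 1 := by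
  by_cases h0 : v = 0
  · subst h0; rw [Fm_zero, pgx_zero]; norm_num
  · have hP := pg_pos hρ hden h0
    have hle : pgx n a d v ≤ 1 := by
      have := pg_le_norm hρ hden v
      have h1 : ‖v‖/ρ ≤ 1 := by rw [div_le_one hρ]; exact hv
      linarith
    rw [Fm_inner hρ hden hle, pgx_smul _ (by positivity)]
    rw [min_eq_right hv]
    have heq : ‖v‖ / (ρ * pgx n a d v) * pgx n a d v = ‖v‖ / ρ := by
      field_simp
    rw [heq, div_le_one hρ]
    exact hv

lemma Fm_surj (hρ : 0 < ρ) (hden : ∀ i, |d i| + ρ < a)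
    {z : EuclideanSpace ℝ (Fin n)} (hz : pgx n a d z ≤ 1) :
    ∃ v, ‖v‖ ≤ ρ ∧ Fm n a ρ d v = z := by
  by_cases h0 : z = 0
  · exact ⟨0, by simp [hρ.le], by rw [Fm_zero, h0]⟩
  · have hP := pg_pos hρ hden h0
    have hnz : (0:ℝ) < ‖z‖ := norm_pos_iff.mpr h0
    set s := ρ * pgx n a d z / ‖z‖ with hsdef
    have hs : 0 < s := by positivity
    have hkey : ρ * pgx n a d z ≤ ‖z‖ := by
      have := pg_le_norm hρ hden z
      rw [le_div_iff₀ hρ] at this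
      linarith [mul_comm (pgx n a d z) ρ]
    refine ⟨s • z, ?_, ?_⟩
    · rw [norm_smul, Real.norm_eq_abs, abs_of_pos hs, hsdef]
      rw [div_mul_cancel₀ _ (ne_of_gt hnz)]
      nlinarith
    · have hvnorm : ‖s • z‖ = ρ * pgx n a d z := by
        rw [norm_smul, Real.norm_eq_abs, abs_of_pos hs, hsdef,
          div_mul_cancel₀ _ (ne_of_gt hnz)]
      have hpgv : pgx n a d (s • z) = s * pgx n a d z := pgx_smul s hs.le z
      have hs1 : s * pgx n a d z ≤ pgx n a d z := by
        have : s ≤ 1 := by rw [hsdef, div_le_one hnz]; exact hkey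
        nlinarith
      have hle : pgx n a d (s • z) ≤ 1 := by rw [hpgv]; linarith
      rw [Fm_inner hρ hden hle, hvnorm, hpgv]
      rw [min_eq_right (by nlinarith : ρ * pgx n a d z ≤ ρ)]
      have hcoef : ρ * pgx n a d z / (ρ * (s * pgx n a d z)) = 1/s := by
        field_simp
      rw [hcoef, smul_smul, one_div, inv_mul_cancel₀ (ne_of_gt hs), one_smul]

lemma Fm_bdry (hρ : 0 < ρ) (hden : ∀ i, |d i| + ρ < a)
    {v : EuclideanSpace ℝ (Fin n)} (hv1 : ρ ≤ ‖v‖) (hv2 : pgx n a d v ≤ 1) :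
    pgx n a d (Fm n a ρ d v) = 1 := by
  have h0 : v ≠ 0 := by
    intro h; rw [h, norm_zero] at hv1; linarith
  have hP := pg_pos hρ hden h0
  rw [Fm_inner hρ hden hv2, min_eq_left hv1, pgx_smul _ (by positivity)]
  field_simp
end

/-- Emptying a cube (Step one of the proof of Theorem 3): there is a Lipschitz
map which is the identity outside the closed cube `Q₀`, stretches the closed
ball `U₀ ⊂⊂ int Q₀` onto `Q₀`, and sends `Q₀ \ int U₀` into `∂Q₀`. -/
theorem stmt_13 (n : ℕ) (c : EuclideanSpace ℝ (Fin n)) (a : ℝ) (ha : 0 < a)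
    (Q₀ : Set (EuclideanSpace ℝ (Fin n)))
    (hQ₀ : Q₀ = {x : EuclideanSpace ℝ (Fin n) | ∀ i, |x i - c i| ≤ a})
    (y : EuclideanSpace ℝ (Fin n)) (ρ : ℝ) (hρ : 0 < ρ)
    (U₀ : Set (EuclideanSpace ℝ (Fin n))) (hU₀ : U₀ = closedBall y ρ)
    (hsub : U₀ ⊆ interior Q₀) :
    ∃ f₀ : EuclideanSpace ℝ (Fin n) → EuclideanSpace ℝ (Fin n),
      (∃ C : ℝ≥0, LipschitzWith C f₀) ∧
      (∀ x ∉ Q₀, f₀ x = x) ∧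
      f₀ '' U₀ = Q₀ ∧
      f₀ '' (Q₀ \ interior U₀) ⊆ frontier Q₀ := by
  rcases Nat.eq_zero_or_pos n with hn | hn
  · -- trivial case : the space is a single point
    subst hn
    haveI : Subsingleton (EuclideanSpace ℝ (Fin 0)) := inferInstance
    have hQ : Q₀ = univ := by
      rw [hQ₀]; ext x; simp only [mem_setOf_eq, mem_univ, iff_true]
      intro i; exact i.elim0
    have hU : U₀ = univ := by
      rw [hU₀]; ext x; simp only [mem_closedBall, mem_univ, iff_true]
      rw [Subsingleton.elim x y, dist_self]; exact hρ.le
    refine ⟨id, ⟨1, LipschitzWith.id⟩, fun x _ => rfl, ?_, ?_⟩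
    · rw [hU, hQ, image_id]
    · rw [hQ, hU, interior_univ, diff_self, image_empty]
      exact empty_subset _
  · haveI : NeZero n := ⟨Nat.pos_iff_ne_zero.mp hn⟩
    set d : Fin n → ℝ := fun i => y i - c i with hd_def
    have htrans : ∀ (x : EuclideanSpace ℝ (Fin n)) (i : Fin n),
        (x - y) i + d i = x i - c i := by
      intro x i
      have h : (x - y) i = x i - y i := rfl
      rw [h, hd_def]; ring
    have hSopen : IsOpen {x : EuclideanSpace ℝ (Fin n) | ∀ i, |x i - c i| < a} := by
      rw [Set.setOf_forall]
      refine isOpen_iInter_of_finite fun i => ?_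
      have hev : Continuous fun x : EuclideanSpace ℝ (Fin n) => x i := (EuclideanSpace.proj i).continuous
      exact isOpen_lt ((hev.sub continuous_const).abs) continuous_const
    have hSsubQ : {x : EuclideanSpace ℝ (Fin n) | ∀ i, |x i - c i| < a} ⊆ Q₀ := by
      rw [hQ₀]; intro x hx i; exact (hx i).le
    have hIntS : interior Q₀ ⊆ {x : EuclideanSpace ℝ (Fin n) | ∀ i, |x i - c i| < a} := by
      intro x hx i
      obtain ⟨ε, hε, hball⟩ := Metric.mem_nhds_iff.mp (mem_interior_iff_mem_nhds.mp hx)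
      set t : ℝ := if 0 ≤ x i - c i then 1 else -1 with ht_def
      have hxt : x + (ε/2) • EuclideanSpace.single i t ∈ Q₀ := by
        apply hball
        rw [mem_ball, dist_eq_norm, add_sub_cancel_left, norm_smul, Real.norm_eq_abs,
          EuclideanSpace.norm_single, Real.norm_eq_abs]
        have habs : |t| = 1 := by rw [ht_def]; split_ifs <;> simp
        rw [habs, abs_of_pos (by linarith : (0:ℝ) < ε/2), mul_one]; linarith
      rw [hQ₀] at hxt
      have h2 := hxt i
      have happ : (x + (ε/2) • EuclideanSpace.single i t) i
          = x i + (ε/2) * (EuclideanSpace.single i t i) := rfl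
      rw [happ, EuclideanSpace.single_apply, if_pos rfl] at h2
      rw [abs_le] at h2
      rw [abs_lt]
      rw [ht_def] at h2
      split_ifs at h2 with hsign
      · exact ⟨by linarith [h2.1], by linarith [h2.2]⟩
      · push_neg at hsign
        exact ⟨by linarith [h2.1], by linarith [h2.2]⟩
    have hden : ∀ i, |d i| + ρ < a := by
      intro i
      have key : ∀ t : ℝ, |t| = 1 → |y i + ρ * t - c i| < a := by
        intro t ht
        have hmem : y + ρ • EuclideanSpace.single i t ∈ U₀ := by
          rw [hU₀, mem_closedBall, dist_eq_norm, add_sub_cancel_left, norm_smul,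
            Real.norm_eq_abs, EuclideanSpace.norm_single, Real.norm_eq_abs, ht,
            abs_of_pos hρ, mul_one]
        have hIn := hIntS (hsub hmem) i
        have happ : (y + ρ • EuclideanSpace.single i t) i
            = y i + ρ * (EuclideanSpace.single i t i) := rfl
        rw [happ, EuclideanSpace.single_apply, if_pos rfl] at hIn
        exact hIn
      have k1 := key 1 (by norm_num)
      have k2 := key (-1) (by norm_num)
      rw [abs_lt] at k1 k2
      have hdi : d i = y i - c i := by rw [hd_def]
      rcases le_or_gt 0 (d i) with h|h
      · rw [abs_of_nonneg h]
        rw [hdi] at h ⊢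
        have := k1.2; linarith
      · rw [abs_of_neg h]
        rw [hdi] at h ⊢
        have := k2.1; linarith
    have hQmem : ∀ x, x ∈ Q₀ ↔ pgx n a d (x - y) ≤ 1 := by
      intro x
      rw [hQ₀, mem_setOf_eq, pg_le_one_iff hρ hden]
      constructor
      · intro h i; rw [htrans x i]; exact h i
      · intro h i; have := h i; rwa [htrans x i] at this
    have hQint : interior Q₀ = {x | pgx n a d (x - y) < 1} := by
      apply subset_antisymm
      · intro x hx
        have hS := hIntS hx
        rw [mem_setOf_eq, pg_lt_one_iff hρ hden]
        intro i; rw [htrans x i]; exact hS i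
      · intro x hx
        refine interior_maximal hSsubQ hSopen ?_
        rw [mem_setOf_eq, pg_lt_one_iff hρ hden] at hx
        intro i
        have := hx i; rwa [htrans x i] at this
    have hQclosed : IsClosed Q₀ := by
      rw [hQ₀, Set.setOf_forall]
      refine isClosed_iInter fun i => ?_
      have hev : Continuous fun x : EuclideanSpace ℝ (Fin n) => x i := (EuclideanSpace.proj i).continuous
      exact isClosed_le ((hev.sub continuous_const).abs) continuous_const
    have hfr : frontier Q₀ = Q₀ \ interior Q₀ := hQclosed.frontier_eq
    refine ⟨fun x => y + Fm n a ρ d (x - y),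
      ⟨(2*(2*a*n)/ρ + (2*a*n)^2/ρ^2).toNNReal, ?_⟩, ?_, ?_, ?_⟩
    · apply LipschitzWith.of_dist_le_mul
      intro x x'
      have hL0 : (0:ℝ) ≤ 2*(2*a*(n:ℝ))/ρ + (2*a*(n:ℝ))^2/ρ^2 := by positivity
      rw [Real.coe_toNNReal _ hL0, dist_eq_norm, dist_eq_norm]
      have h1 : (y + Fm n a ρ d (x - y)) - (y + Fm n a ρ d (x' - y))
          = Fm n a ρ d (x - y) - Fm n a ρ d (x' - y) := by abel
      show ‖(y + Fm n a ρ d (x - y)) - (y + Fm n a ρ d (x' - y))‖ ≤ _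
      rw [h1]
      have h2 := Fm_lip hρ hden (x - y) (x' - y)
      rwa [sub_sub_sub_cancel_right] at h2
    · intro x hx
      rw [hQmem] at hx
      push_neg at hx
      show y + Fm n a ρ d (x - y) = x
      rw [Fm_id hρ hden hx.le]
      abel
    · apply subset_antisymm
      · rintro z ⟨x, hx, rfl⟩
        rw [hU₀, mem_closedBall, dist_eq_norm] at hx
        rw [hQmem]
        have h1 : (y + Fm n a ρ d (x - y)) - y = Fm n a ρ d (x - y) := by abel
        show pgx n a d ((y + Fm n a ρ d (x - y)) - y) ≤ 1
        rw [h1]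
        exact Fm_maps_ball hρ hden hx
      · intro z hz
        rw [hQmem] at hz
        obtain ⟨v, hv, hFv⟩ := Fm_surj hρ hden hz
        refine ⟨y + v, ?_, ?_⟩
        · rw [hU₀, mem_closedBall, dist_eq_norm]
          have h1 : y + v - y = v := by abel
          rw [h1]; exact hv
        · show y + Fm n a ρ d ((y + v) - y) = z
          have h1 : y + v - y = v := by abel
          rw [h1, hFv]
          abel
    · rintro z ⟨x, ⟨hxQ, hxU⟩, rfl⟩
      have hxU' : ρ ≤ ‖x - y‖ := by
        rw [hU₀, interior_closedBall y (ne_of_gt hρ)] at hxU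
        rw [mem_ball, dist_eq_norm] at hxU
        exact not_lt.mp hxU
      rw [hQmem] at hxQ
      have hb := Fm_bdry hρ hden hxU' hxQ
      have h1 : (y + Fm n a ρ d (x - y)) - y = Fm n a ρ d (x - y) := by abel
      rw [hfr]
      constructor
      · rw [hQmem]
        show pgx n a d ((y + Fm n a ρ d (x - y)) - y) ≤ 1
        rw [h1, hb]
      · rw [hQint]
        intro hcon
        rw [mem_setOf_eq, h1, hb] at hcon
        exact lt_irrefl 1 hcon
end
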